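/- arXiv:1112.0367 — 6 statements merged into one kernel-verified Lean document; each statement's English description precedes it below -/
import Mathlib

section
/- Let H be a finitely generated torsion-free nilpotent group of class at most 2 whose centre Z is infinite cyclic with generator z. Then H/Z is a finitely generated torsion-free (hence free) abelian group, for all x, y ∈ H there is a unique integer m with [x,y] = z^m, and the map β defined by β(xZ, yZ) = m (where [x,y] = z^m) is a well-defined ℤ-bilinear alternating form on H/Z which is nondegenerate: if β(xZ, yZ) = 0 for all y ∈ H then x ∈ Z. -/
/-!
Class 2 puts every commutator in `Z = ⟨z⟩`, so `[x, y] = z ^ β(x, y)`, with `β(x, y)` unique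
since `z` has infinite order. As commutators are central, `[·, ·]` is multiplicative in each
variable, so `β` is biadditive; and `β(x, y) = 0` exactly when `x` and `y` commute. Hence `β`
vanishes on `Z` in either argument, descends to `H/Z`, and is nondegenerate there. The same
fact makes `H/Z` torsion-free: if `x ^ n ∈ Z` with `n ≠ 0`, then `n • β(x, ·) = 0`, so
`β(x, ·) = 0` and `x ∈ Z`.
-/

/-- A monoid is torsion-free if every non-identity element has infinite order
(the definition of `Monoid.IsTorsionFree` in the older Mathlib). -/
def Monoid.IsTorsionFree (G : Type*) [Monoid G] : Prop :=
  ∀ g : G, g ≠ 1 → ¬IsOfFinOrder g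

open Subgroup
open scoped commutatorElement

theorem commutatorElement_inv_inv {G : Type*} [Group G] (x y : G) :
    ⁅x⁻¹, y⁻¹⁆ = x⁻¹ * y⁻¹ * x * y := by
  simp only [commutatorElement_def, inv_inv]

theorem inv_mul_inv_mul_mul_eq_one_iff_commute {G : Type*} [Group G] {x y : G} :
    x⁻¹ * y⁻¹ * x * y = 1 ↔ Commute x y := by
  rw [← commutatorElement_inv_inv, commutatorElement_eq_one_iff_commute, Commute.inv_inv_iff]

theorem commutator_mem_center_of_lowerCentralSeries_two_eq_bot {G : Type*} [Group G]
    (h : (⊤ : Subgroup G).lowerCentralSeries 2 = ⊥) (x y : G) :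
    x⁻¹ * y⁻¹ * x * y ∈ center G := by
  have hle : commutator G ≤ center G := commutator_top_right_eq_bot_iff_le_center.mp h
  rw [← commutatorElement_inv_inv]
  exact hle (commutator_mem_commutator (mem_top _) (mem_top _))

theorem QuotientGroup.mul_comm_of_forall_mem {G : Type*} [Group G] {N : Subgroup G} [N.Normal]
    (h : ∀ x y : G, x⁻¹ * y⁻¹ * x * y ∈ N) (a b : G ⧸ N) : a * b = b * a := by
  induction a using QuotientGroup.induction_on with | H x =>
  induction b using QuotientGroup.induction_on with | H y =>
  rw [← QuotientGroup.mk_mul, ← QuotientGroup.mk_mul, QuotientGroup.eq]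
  simpa only [mul_inv_rev, ← mul_assoc] using h y x

def IsCommutatorExponent {G : Type*} [Group G] (z : G) (e : G → G → ℤ) : Prop :=
  ∀ x y : G, x⁻¹ * y⁻¹ * x * y = z ^ e x y

theorem exists_isCommutatorExponent {G : Type*} [Group G] {z : G}
    (h : ∀ x y : G, x⁻¹ * y⁻¹ * x * y ∈ zpowers z) : ∃ e, IsCommutatorExponent z e := by
  choose e he using fun x y => mem_zpowers_iff.mp (h x y)
  exact ⟨e, fun x y => (he x y).symm⟩

namespace IsCommutatorExponent

variable {G : Type*} [Group G] {z : G} {e : G → G → ℤ}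
  (he : IsCommutatorExponent z e) (hz : ¬IsOfFinOrder z)
include he hz

theorem eq_of_eq_zpow {x y : G} {m : ℤ} (h : x⁻¹ * y⁻¹ * x * y = z ^ m) : e x y = m :=
  injective_zpow_iff_not_isOfFinOrder.mpr hz ((he x y).symm.trans h)

theorem eq_zero_iff_commute {x y : G} : e x y = 0 ↔ Commute x y := by
  rw [← inv_mul_inv_mul_mul_eq_one_iff_commute, he x y, ← zpow_zero z,
    (injective_zpow_iff_not_isOfFinOrder.mpr hz).eq_iff]

theorem self_eq_zero (x : G) : e x x = 0 :=
  (he.eq_zero_iff_commute hz).mpr (Commute.refl x)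

theorem mem_center_iff_forall_eq_zero {x : G} : x ∈ center G ↔ ∀ y, e x y = 0 := by
  simp only [mem_center_iff, he.eq_zero_iff_commute hz]
  exact forall_congr' fun y => eq_comm

theorem eq_zero_of_mem_center_right (x : G) {c : G} (hc : c ∈ center G) : e x c = 0 :=
  (he.eq_zero_iff_commute hz).mpr (mem_center_iff.mp hc x)

theorem mul_left (hzc : z ∈ center G) (x x' y : G) : e (x * x') y = e x y + e x' y := by
  refine he.eq_of_eq_zpow hz ?_
  have hcentral := mem_center_iff.mp (zpow_mem hzc (e x y)) x'⁻¹
  calc (x * x')⁻¹ * y⁻¹ * (x * x') * y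
        = x'⁻¹ * (x⁻¹ * y⁻¹ * x * y) * (y⁻¹ * x' * y) := by group
    _ = z ^ e x y * (x'⁻¹ * y⁻¹ * x' * y) := by rw [he x y, hcentral]; group
    _ = z ^ (e x y + e x' y) := by rw [he x' y, zpow_add]

theorem mul_right (hzc : z ∈ center G) (x y y' : G) : e x (y * y') = e x y + e x y' := by
  refine he.eq_of_eq_zpow hz ?_
  have hcentral := mem_center_iff.mp (zpow_mem hzc (e x y)) y'
  calc x⁻¹ * (y * y')⁻¹ * x * (y * y')
        = (x⁻¹ * y'⁻¹ * x * y') * (y'⁻¹ * (x⁻¹ * y⁻¹ * x * y) * y') := by group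
    _ = z ^ e x y' * z ^ e x y := by rw [he x y, mul_assoc y'⁻¹, ← hcentral, he x y']; group
    _ = z ^ (e x y + e x y') := by rw [← zpow_add, add_comm]

theorem pow_left (hzc : z ∈ center G) (x y : G) (n : ℕ) : e (x ^ n) y = n * e x y := by
  induction n with
  | zero => simpa using (he.eq_zero_iff_commute hz).mpr (Commute.one_left y)
  | succ n ih => rw [pow_succ, he.mul_left hz hzc, ih]; push_cast; ring

theorem mem_center_of_pow_mem_center (hzc : z ∈ center G) {x : G} {n : ℕ} (hn : n ≠ 0)
    (hxn : x ^ n ∈ center G) : x ∈ center G := by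
  refine (he.mem_center_iff_forall_eq_zero hz).mpr fun y => ?_
  have h := (he.mem_center_iff_forall_eq_zero hz).mp hxn y
  rw [he.pow_left hz hzc] at h
  exact (mul_eq_zero.mp h).resolve_left (Nat.cast_ne_zero.mpr hn)

theorem isTorsionFree_quotient_center (hzc : z ∈ center G) :
    Monoid.IsTorsionFree (G ⧸ center G) := by
  intro a ha hfin
  induction a using QuotientGroup.induction_on with | H x =>
  obtain ⟨n, hn, hxn⟩ := isOfFinOrder_iff_pow_eq_one.mp hfin
  rw [← QuotientGroup.mk_pow, QuotientGroup.eq_one_iff] at hxn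
  exact ha ((QuotientGroup.eq_one_iff x).mpr (he.mem_center_of_pow_mem_center hz hzc hn.ne' hxn))

theorem mul_center_mul_center (hzc : z ∈ center G) (x y : G) {c d : G} (hc : c ∈ center G)
    (hd : d ∈ center G) : e (x * c) (y * d) = e x y := by
  rw [he.mul_left hz hzc, he.mul_right hz hzc, he.mul_right hz hzc,
    he.eq_zero_of_mem_center_right hz x hd, he.eq_zero_of_mem_center_right hz c hd,
    (he.mem_center_iff_forall_eq_zero hz).mp hc y, add_zero, add_zero, add_zero]

theorem exists_lift_quotient_center (hzc : z ∈ center G) :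
    ∃ β : G ⧸ center G → G ⧸ center G → ℤ, ∀ x y : G, β x y = e x y := by
  refine ⟨fun a b => Quotient.liftOn₂' a b e fun x y x' y' hx hy => ?_, fun _ _ => rfl⟩
  obtain ⟨c, hc, rfl⟩ : ∃ c ∈ center G, x' = x * c :=
    ⟨x⁻¹ * x', QuotientGroup.leftRel_apply.mp hx, by group⟩
  obtain ⟨d, hd, rfl⟩ : ∃ d ∈ center G, y' = y * d :=
    ⟨y⁻¹ * y', QuotientGroup.leftRel_apply.mp hy, by group⟩
  exact (he.mul_center_mul_center hz hzc x y hc hd).symm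

end IsCommutatorExponent

theorem commutator_symplectic_form_of_cyclic_centre_general
    (H : Type) [Group H] (hfg : Group.FG H)
    (hclass : (⊤ : Subgroup H).lowerCentralSeries 2 = ⊥)
    (z : H) (hz : Subgroup.center H = Subgroup.zpowers z) (hzinf : ¬ IsOfFinOrder z) :
    Group.FG (H ⧸ Subgroup.center H) ∧
    Monoid.IsTorsionFree (H ⧸ Subgroup.center H) ∧
    (∀ a b : H ⧸ Subgroup.center H, a * b = b * a) ∧
    (∀ x y : H, ∃! m : ℤ, x⁻¹ * y⁻¹ * x * y = z ^ m) ∧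
    ∃ β : (H ⧸ Subgroup.center H) → (H ⧸ Subgroup.center H) → ℤ,
      (∀ x y : H, x⁻¹ * y⁻¹ * x * y =
          z ^ β ((x : H) : H ⧸ Subgroup.center H) ((y : H) : H ⧸ Subgroup.center H)) ∧
      (∀ a b c : H ⧸ Subgroup.center H, β (a * b) c = β a c + β b c) ∧
      (∀ a b c : H ⧸ Subgroup.center H, β a (b * c) = β a b + β a c) ∧
      (∀ a : H ⧸ Subgroup.center H, β a a = 0) ∧
      (∀ x : H, (∀ y : H,
          β ((x : H) : H ⧸ Subgroup.center H) ((y : H) : H ⧸ Subgroup.center H) = 0) →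
          x ∈ Subgroup.center H) := by
  have hzc : z ∈ center H := hz ▸ mem_zpowers z
  have hcentral := commutator_mem_center_of_lowerCentralSeries_two_eq_bot hclass
  obtain ⟨e, he⟩ := exists_isCommutatorExponent fun x y => hz ▸ hcentral x y
  obtain ⟨β, hβ⟩ := he.exists_lift_quotient_center hzinf hzc
  have hsurj := QuotientGroup.mk_surjective (s := center H)
  refine ⟨@QuotientGroup.fg _ _ hfg _ _, he.isTorsionFree_quotient_center hzinf hzc,
    QuotientGroup.mul_comm_of_forall_mem hcentral,
    fun x y => ⟨e x y, he x y, fun m hm => (he.eq_of_eq_zpow hzinf hm).symm⟩,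
    β, fun x y => hβ x y ▸ he x y, ?_, ?_, ?_, ?_⟩
  · refine hsurj.forall₃.mpr fun x x' y => ?_
    simpa only [← QuotientGroup.mk_mul, hβ] using he.mul_left hzinf hzc x x' y
  · refine hsurj.forall₃.mpr fun x y y' => ?_
    simpa only [← QuotientGroup.mk_mul, hβ] using he.mul_right hzinf hzc x y y'
  · exact hsurj.forall.mpr fun x => (hβ x x).trans (he.self_eq_zero hzinf x)
  · exact fun x hx => (he.mem_center_iff_forall_eq_zero hzinf).mpr fun y => hβ x y ▸ hx y

/-- Let `H` be a finitely generated torsion-free nilpotent group of class at most 2 whose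
centre is infinite cyclic, generated by `z`.  Then `H/Z` is a finitely generated
torsion-free (hence free) abelian group; for all `x y : H` there is a unique `m : ℤ` with
`[x,y] = x⁻¹y⁻¹xy = z ^ m`; and the induced map `β` on `H/Z` with
`β (xZ) (yZ) = m` (where `[x,y] = z ^ m`) is a well-defined ℤ-bilinear alternating form
which is nondegenerate: if `β (xZ) (yZ) = 0` for all `y` then `x ∈ Z`. -/
theorem commutator_symplectic_form_of_cyclic_centre
    (H : Type) [Group H] (hfg : Group.FG H)
    (htf : Monoid.IsTorsionFree H)
    (hclass : (⊤ : Subgroup H).lowerCentralSeries 2 = ⊥)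
    (z : H) (hz : Subgroup.center H = Subgroup.zpowers z) (hzinf : ¬ IsOfFinOrder z) :
    Group.FG (H ⧸ Subgroup.center H) ∧
    Monoid.IsTorsionFree (H ⧸ Subgroup.center H) ∧
    (∀ a b : H ⧸ Subgroup.center H, a * b = b * a) ∧
    (∀ x y : H, ∃! m : ℤ, x⁻¹ * y⁻¹ * x * y = z ^ m) ∧
    ∃ β : (H ⧸ Subgroup.center H) → (H ⧸ Subgroup.center H) → ℤ,
      (∀ x y : H, x⁻¹ * y⁻¹ * x * y =
          z ^ β ((x : H) : H ⧸ Subgroup.center H) ((y : H) : H ⧸ Subgroup.center H)) ∧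
      (∀ a b c : H ⧸ Subgroup.center H, β (a * b) c = β a c + β b c) ∧
      (∀ a b c : H ⧸ Subgroup.center H, β a (b * c) = β a b + β a c) ∧
      (∀ a : H ⧸ Subgroup.center H, β a a = 0) ∧
      (∀ x : H, (∀ y : H,
          β ((x : H) : H ⧸ Subgroup.center H) ((y : H) : H ⧸ Subgroup.center H) = 0) →
          x ∈ Subgroup.center H) :=
  commutator_symplectic_form_of_cyclic_centre_general H hfg hclass z hz hzinf
end

section
/- Let 𝔽 be a subfield of ℝ, let (V, β) be a symplectic space over 𝔽 of dimension 2k, and let Ω be a finite collection of subspaces of V, each of dimension at most k. Then there exists a Lagrangian subspace L of V such that L ∩ W = {0} for every W ∈ Ω. -/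
open Module

/-!
The Lagrangian is built one vector at a time. Suppose `L` is isotropic of dimension `j < k`,
meets every `W ∈ Ω` trivially, and `dim (W ⊓ L^⊥) + j ≤ k` for every `W ∈ Ω`. Choose `v ∈ L^⊥`
outside the finitely many proper subspaces `L`, `L ⊔ (W ⊓ L^⊥)` and, when `W ⊓ L^⊥ ≠ 0`,
`(W ⊓ L^⊥)^⊥` of `L^⊥`; this is possible since a vector space over an infinite field is not a
finite union of proper subspaces. Then `L ⊔ 𝔽v` is isotropic, still meets every `W` trivially,
and `v` cuts the dimension of each nonzero `W ⊓ L^⊥` down by one, so the invariant persists.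
-/

namespace Submodule

variable {K V : Type*} [Field K] [AddCommGroup V] [Module K V]

theorem exists_mem_forall_notMem_of_forall_not_le [Infinite K] {P : Submodule K V}
    {s : Finset (Submodule K V)} (hs : ∀ q ∈ s, ¬P ≤ q) : ∃ v ∈ P, ∀ q ∈ s, v ∉ q := by
  classical
  have htop : ⊤ ∉ s.image (comap P.subtype) := by
    simpa [comap_subtype_eq_top] using hs
  obtain ⟨x, hx⟩ := Set.ne_univ_iff_exists_notMem _ |>.mp
    (Subspace.biUnion_ne_univ_of_top_notMem htop)
  exact ⟨x, x.2, fun q hq hxq => hx (Set.mem_biUnion (Finset.mem_image_of_mem _ hq) hxq)⟩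

theorem disjoint_sup_span_singleton {L W : Submodule K V} {v : V} (hLW : Disjoint L W)
    (hv : v ∉ L ⊔ W) : Disjoint (L ⊔ K ∙ v) W :=
  (hLW.symm.disjoint_sup_right_of_disjoint_sup_left
    (sup_comm L W ▸ disjoint_span_singleton_of_notMem hv)).symm

end Submodule

namespace LinearMap.BilinForm

variable {K V : Type*} [Field K] [AddCommGroup V] [Module K V] {B : LinearMap.BilinForm K V}

theorem orthogonal_sup (M N : Submodule K V) :
    B.orthogonal (M ⊔ N) = B.orthogonal M ⊓ B.orthogonal N :=
  le_antisymm (le_inf (orthogonal_le le_sup_left) (orthogonal_le le_sup_right)) fun x hx =>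
    show M ⊔ N ≤ LinearMap.ker (B.flip x) from sup_le hx.1 hx.2

theorem IsRefl.le_orthogonal_comm (hB : B.IsRefl) {M N : Submodule K V} :
    N ≤ B.orthogonal M ↔ M ≤ B.orthogonal N :=
  ⟨fun h _ hm _ hn => hB _ _ (h hn _ hm), fun h _ hn _ hm => hB _ _ (h hm _ hn)⟩

theorem IsAlt.span_singleton_le_orthogonal (hB : B.IsAlt) (v : V) :
    K ∙ v ≤ B.orthogonal (K ∙ v) := by
  rw [Submodule.span_singleton_le_iff_mem]
  intro w hw
  obtain ⟨c, rfl⟩ := Submodule.mem_span_singleton.mp hw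
  simp [hB v]

structure IsIsotropicAvoiding (B : LinearMap.BilinForm K V) (k : ℕ) (Ω : Finset (Submodule K V))
    (L : Submodule K V) : Prop where
  isotropic : L ≤ B.orthogonal L
  disjoint : ∀ W ∈ Ω, Disjoint L W
  finrank_inf_orthogonal_add_le : ∀ W ∈ Ω, finrank K ↥(W ⊓ B.orthogonal L) + finrank K L ≤ k

variable {k : ℕ} {Ω : Finset (Submodule K V)} {L : Submodule K V} {v : V}

theorem isIsotropicAvoiding_bot (hΩ : ∀ W ∈ Ω, finrank K W ≤ k) :
    B.IsIsotropicAvoiding k Ω ⊥ where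
  isotropic := bot_le
  disjoint _ _ := disjoint_bot_left
  finrank_inf_orthogonal_add_le W hW := by
    rw [orthogonal_bot, inf_top_eq, finrank_bot, add_zero]
    exact hΩ W hW

variable [FiniteDimensional K V]

theorem IsIsotropicAvoiding.sup_span_singleton (hB : B.IsAlt) (hL : B.IsIsotropicAvoiding k Ω L)
    (hlt : finrank K L < k) (hvL : v ∈ B.orthogonal L)
    (hvW : ∀ W ∈ Ω, v ∉ L ⊔ (W ⊓ B.orthogonal L))
    (hvD : ∀ W ∈ Ω, W ⊓ B.orthogonal L ≠ ⊥ → v ∉ B.orthogonal (W ⊓ B.orthogonal L)) :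
    B.IsIsotropicAvoiding k Ω (L ⊔ K ∙ v) where
  isotropic := by
    have hLv : L ≤ B.orthogonal (K ∙ v) :=
      hB.isRefl.le_orthogonal_comm.mp ((Submodule.span_singleton_le_iff_mem _ _).mpr hvL)
    rw [orthogonal_sup]
    exact sup_le (le_inf hL.isotropic hLv)
      (le_inf (hB.isRefl.le_orthogonal_comm.mp hLv) (hB.span_singleton_le_orthogonal v))
  disjoint W hW := by
    have hle : L ⊔ K ∙ v ≤ B.orthogonal L :=
      sup_le hL.isotropic ((Submodule.span_singleton_le_iff_mem _ _).mpr hvL)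
    have hD := Submodule.disjoint_sup_span_singleton
      ((hL.disjoint W hW).mono_right inf_le_left) (hvW W hW)
    exact Submodule.disjoint_def.mpr fun x hx hxW => Submodule.disjoint_def.mp hD x hx ⟨hxW, hle hx⟩
  finrank_inf_orthogonal_add_le W hW := by
    have hv1 : finrank K (K ∙ v) ≤ 1 := by
      simpa using finrank_span_le_card (R := K) ({v} : Set V)
    have hsup := Submodule.finrank_add_le_finrank_add_finrank L (K ∙ v)
    have hLW := hL.finrank_inf_orthogonal_add_le W hW
    rw [orthogonal_sup, ← inf_assoc]
    rcases eq_or_ne (W ⊓ B.orthogonal L) ⊥ with hD | hD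
    · rw [hD, bot_inf_eq, finrank_bot]
      omega
    · have : finrank K ↥(W ⊓ B.orthogonal L ⊓ B.orthogonal (K ∙ v)) <
          finrank K ↥(W ⊓ B.orthogonal L) :=
        Submodule.finrank_lt_finrank_of_lt <| inf_lt_left.mpr fun h => hvD W hW hD <|
          (Submodule.span_singleton_le_iff_mem _ _).mp (hB.isRefl.le_orthogonal_comm.mp h)
      omega

theorem IsIsotropicAvoiding.exists_sup_span_singleton [Infinite K] (hB : B.IsAlt)
    (hnd : B.Nondegenerate) (hdim : finrank K V = 2 * k) (hL : B.IsIsotropicAvoiding k Ω L)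
    (hlt : finrank K L < k) : ∃ v ∉ L, B.IsIsotropicAvoiding k Ω (L ⊔ K ∙ v) := by
  classical
  set P := B.orthogonal L
  have hP : finrank K P = 2 * k - finrank K L := by rw [finrank_orthogonal hnd, hdim]
  have not_le_of_finrank_lt {q : Submodule K V} (hq : finrank K q < finrank K P) : ¬P ≤ q :=
    fun h => (Submodule.finrank_mono h).not_gt hq
  set bad : Finset (Submodule K V) := insert L (Ω.image (fun W => L ⊔ (W ⊓ P)) ∪
    (Ω.filter (fun W => W ⊓ P ≠ ⊥)).image (fun W => B.orthogonal (W ⊓ P)))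
  have hbad : ∀ q ∈ bad, ¬P ≤ q := by
    simp only [bad, Finset.forall_mem_insert, Finset.forall_mem_union, Finset.forall_mem_image,
      Finset.mem_filter, and_imp]
    refine ⟨not_le_of_finrank_lt (by omega), fun W hW => not_le_of_finrank_lt ?_,
      fun W hW hD h => hD ?_⟩
    · have : finrank K ↥(W ⊓ P) + finrank K L ≤ k := hL.finrank_inf_orthogonal_add_le W hW
      have := Submodule.finrank_add_le_finrank_add_finrank L (W ⊓ P)
      omega
    · -- `P ≤ (W ⊓ P)^⊥` would put `W ⊓ P` inside `P^⊥ = L`, which meets `W` trivially.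
      refine ((hL.disjoint W hW).mono_right inf_le_left).symm.eq_bot_of_le ?_
      simpa [P, orthogonal_orthogonal hnd hB.isRefl] using hB.isRefl.le_orthogonal_comm.mp h
  obtain ⟨v, hvP, hv⟩ := Submodule.exists_mem_forall_notMem_of_forall_not_le hbad
  simp only [bad, Finset.forall_mem_insert, Finset.forall_mem_union, Finset.forall_mem_image,
    Finset.mem_filter, and_imp] at hv
  exact ⟨v, hv.1, hL.sup_span_singleton hB hlt hvP hv.2.1 hv.2.2⟩

theorem exists_isIsotropicAvoiding_finrank_eq [Infinite K] (hB : B.IsAlt) (hnd : B.Nondegenerate)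
    (hdim : finrank K V = 2 * k) (hΩ : ∀ W ∈ Ω, finrank K W ≤ k) :
    ∀ j ≤ k, ∃ L, B.IsIsotropicAvoiding k Ω L ∧ finrank K L = j
  | 0, _ => ⟨⊥, isIsotropicAvoiding_bot hΩ, finrank_bot K V⟩
  | j + 1, hj => by
    obtain ⟨L, hL, rfl⟩ := exists_isIsotropicAvoiding_finrank_eq hB hnd hdim hΩ j (by omega)
    obtain ⟨v, hv, hLv⟩ := hL.exists_sup_span_singleton hB hnd hdim (by omega)
    exact ⟨_, hLv, Submodule.finrank_sup_span_singleton hv⟩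

end LinearMap.BilinForm

/-- Let `(V, β)` be a symplectic space of dimension `2k` over a subfield `𝔽` of `ℝ` and let
`Ω` be a finite collection of subspaces of `V` of dimension at most `k`.  Then there is a
Lagrangian subspace `L` of `V` (an isotropic subspace of dimension `k`) meeting every
member of `Ω` trivially. -/
theorem exists_lagrangian_avoiding_finitely_many_subspaces
    (𝔽 : Subfield ℝ) (V : Type) [AddCommGroup V] [Module 𝔽 V] [FiniteDimensional 𝔽 V]
    (k : ℕ) (hdim : finrank 𝔽 V = 2 * k)
    (β : V →ₗ[𝔽] V →ₗ[𝔽] 𝔽)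
    (halt : ∀ v : V, β v v = 0)
    (hnd : ∀ v : V, (∀ w : V, β v w = 0) → v = 0)
    (Ω : Finset (Submodule 𝔽 V)) (hΩ : ∀ W ∈ Ω, finrank 𝔽 W ≤ k) :
    ∃ L : Submodule 𝔽 V, (∀ x ∈ L, ∀ y ∈ L, β x y = 0) ∧ finrank 𝔽 L = k ∧
      ∀ W ∈ Ω, L ⊓ W = ⊥ := by
  have hβ : LinearMap.BilinForm.IsAlt β := halt
  have hβnd : LinearMap.BilinForm.Nondegenerate β :=
    (LinearMap.IsRefl.nondegenerate_iff_separatingLeft hβ.isRefl).mpr hnd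
  obtain ⟨L, hL, hLk⟩ :=
    LinearMap.BilinForm.exists_isIsotropicAvoiding_finrank_eq hβ hβnd hdim hΩ k le_rfl
  exact ⟨L, fun x hx y hy => hL.isotropic hy x hx, hLk, fun W hW => (hL.disjoint W hW).eq_bot⟩
end

section
/- Let 𝔽 be a subfield of ℝ, let (V, β) be a symplectic space over 𝔽 of dimension 2k with symplectic basis e_1, f_1, …, e_k, f_k, let L be the subspace spanned by e_1, …, e_k, and let Ω be a finite collection of k-dimensional subspaces of V each of which has trivial intersection with L. For μ = (μ_1, …, μ_k) with each μ_i ∈ 𝔽 ∩ [0,1], let K_μ be the subspace spanned by (1−μ_1)e_1 + μ_1 f_1, …, (1−μ_k)e_k + μ_k f_k. Then there exists ε > 0 such that for every μ with μ_i ∈ 𝔽 and 0 ≤ μ_i ≤ ε for all i, the subspace K_μ is transversal to every W ∈ Ω, i.e., V = K_μ ⊕ W. -/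
/-!
Write `eᵢ, fᵢ` for the symplectic basis and `Kμ` for the span of the `(1 - μᵢ) eᵢ + μᵢ fᵢ`.
A subspace `W ∈ Ω` is `k`-dimensional and meets `L = K₀` trivially, so it is a complement of
`L`. Completing `e` by a basis of `W` gives a basis of `V`; the determinant, in that basis, of
the family obtained by replacing `e` with the perturbed vectors depends continuously on `μ`
and equals `1` at `μ = 0`, so it stays nonzero near `0`, and there `Kμ` is still a complement
of `W`. As `Ω` is finite, one neighbourhood of `0` works for all of its members.
-/

open Module Submodule Set Filter Topology

variable {K V ι κ : Type*}

section Ring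

variable [Ring K] [AddCommGroup V] [Module K V]

def lerpFamily (e f : ι → V) (μ : ι → K) : ι → V :=
  fun i => (1 - μ i) • e i + μ i • f i

@[simp]
theorem lerpFamily_zero (e f : ι → V) : lerpFamily e f (0 : ι → K) = e := by
  funext i
  simp [lerpFamily]

end Ring

section CommRing

variable [CommRing K] [AddCommGroup V] [Module K V]
  [Fintype ι] [Fintype κ] [DecidableEq ι] [DecidableEq κ]

theorem isCompl_span_of_isUnit_det (b : Basis (ι ⊕ κ) K V) {v : ι → V} {w : κ → V}
    (h : IsUnit (b.det (Sum.elim v w))) : IsCompl (span K (range v)) (span K (range w)) := by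
  obtain ⟨hli, hspan⟩ := b.is_basis_iff_det.2 h
  simpa only [← range_comp, Sum.elim_comp_inl, Sum.elim_comp_inr] using
    hli.isCompl_span_image hspan isCompl_range_inl_range_inr

theorem continuous_det_sum_elim_lerpFamily [TopologicalSpace K] [IsTopologicalRing K]
    (b : Basis (ι ⊕ κ) K V) (e f : ι → V) (w : κ → V) :
    Continuous fun μ : ι → K => b.det (Sum.elim (lerpFamily e f μ) w) := by
  simp only [Basis.det_apply]
  refine Continuous.matrix_det (continuous_matrix ?_)
  rintro i (j | j)
  · simp only [Basis.toMatrix_apply, Sum.elim_inl, lerpFamily, map_add, map_smul,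
      Finsupp.add_apply, Finsupp.smul_apply, smul_eq_mul]
    fun_prop
  · simp only [Basis.toMatrix_apply, Sum.elim_inr]
    exact continuous_const

end CommRing

theorem eventually_isCompl_span_lerpFamily [Field K] [TopologicalSpace K] [IsTopologicalRing K]
    [T1Space K] [AddCommGroup V] [Module K V] [FiniteDimensional K V] [Fintype ι] [DecidableEq ι]
    {e : ι → V} (he : LinearIndependent K e) (f : ι → V) {W : Submodule K V}
    (hW : IsCompl (span K (range e)) W) :
    ∀ᶠ μ in 𝓝 (0 : ι → K), IsCompl (span K (range (lerpFamily e f μ))) W := by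
  let w := Module.finBasis K W
  let c : Basis (ι ⊕ Fin (finrank K W)) K V :=
    ((Basis.span he).prod w).map (prodEquivOfIsCompl _ _ hW)
  have hc : ⇑c = Sum.elim e (W.subtype ∘ w) := by
    funext x
    rcases x with i | j <;> simp [c, Basis.span_apply]
  have hw : span K (range (W.subtype ∘ w)) = W := by
    rw [range_comp, span_image, w.span_eq, Submodule.map_top, range_subtype]
  have h0 : c.det (Sum.elim (lerpFamily e f (0 : ι → K)) (W.subtype ∘ w)) ≠ 0 := by
    rw [lerpFamily_zero, ← hc, c.det_self]
    exact one_ne_zero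
  filter_upwards [(continuous_det_sum_elim_lerpFamily c e f _).continuousAt.eventually_ne h0]
    with μ hμ
  simpa only [hw] using isCompl_span_of_isUnit_det c (isUnit_iff_ne_zero.2 hμ)

theorem kmu_eventually_transversal_to_Omega_general
    (𝔽 : Subfield ℝ) (V : Type) [AddCommGroup V] [Module 𝔽 V]
    (k : ℕ)
    (b : Basis (Fin k ⊕ Fin k) 𝔽 V)
    (Ω : Finset (Submodule 𝔽 V))
    (hΩdim : ∀ W ∈ Ω, finrank 𝔽 W = k)
    (hΩL : ∀ W ∈ Ω, (Submodule.span 𝔽 (Set.range fun i => b (Sum.inl i))) ⊓ W = ⊥) :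
    ∃ ε : ℝ, 0 < ε ∧ ∀ μ : Fin k → 𝔽, (∀ i, (0 : ℝ) ≤ (μ i : ℝ) ∧ (μ i : ℝ) ≤ ε) →
      ∀ W ∈ Ω, IsCompl (Submodule.span 𝔽
        (Set.range fun i => (1 - μ i) • b (Sum.inl i) + μ i • b (Sum.inr i))) W := by
  have := Module.Finite.of_basis b
  have hL : LinearIndependent 𝔽 fun i => b (Sum.inl i) :=
    b.linearIndependent.comp _ Sum.inl_injective
  have hcompl : ∀ W ∈ Ω, IsCompl (span 𝔽 (range fun i => b (Sum.inl i))) W := fun W hW =>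
    (isCompl_iff_disjoint _ _ (by simp [finrank_span_eq_card hL, hΩdim W hW,
      finrank_eq_card_basis b])).2 (disjoint_iff.2 (hΩL W hW))
  have hev : ∀ᶠ μ in 𝓝 (0 : Fin k → 𝔽), ∀ W ∈ Ω,
      IsCompl (span 𝔽 (range (lerpFamily (fun i => b (Sum.inl i)) (fun i => b (Sum.inr i)) μ)))
        W :=
    (eventually_all_finset Ω).2 fun W hW => eventually_isCompl_span_lerpFamily hL _ (hcompl W hW)
  obtain ⟨ε, hε, hball⟩ := Metric.eventually_nhds_iff.1 hev
  refine ⟨ε / 2, half_pos hε, fun μ hμ => hball ?_⟩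
  rw [dist_pi_lt_iff hε]
  intro i
  rw [Subtype.dist_eq, Real.dist_eq, Pi.zero_apply, ZeroMemClass.coe_zero, sub_zero,
    abs_of_nonneg (hμ i).1]
  linarith [(hμ i).2]

/-- Let `(V, β)` be a symplectic space of dimension `2k` over a subfield `𝔽` of `ℝ` with
symplectic basis `e₁, f₁, …, e_k, f_k` (here `b (.inl i) = eᵢ` and `b (.inr i) = fᵢ`), let
`L` be the subspace spanned by `e₁, …, e_k`, and let `Ω` be a finite collection of
`k`-dimensional subspaces of `V` each meeting `L` trivially.  Then there exists `ε > 0`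
such that for every `μ = (μ₁, …, μ_k)` with `μᵢ ∈ 𝔽` and `0 ≤ μᵢ ≤ ε` for all `i`, the
subspace `K_μ` spanned by the vectors `(1-μᵢ)eᵢ + μᵢfᵢ` is transversal to every `W ∈ Ω`,
i.e. `V = K_μ ⊕ W`. -/
theorem kmu_eventually_transversal_to_Omega
    (𝔽 : Subfield ℝ) (V : Type) [AddCommGroup V] [Module 𝔽 V]
    (k : ℕ)
    (β : V →ₗ[𝔽] V →ₗ[𝔽] 𝔽)
    (halt : ∀ v : V, β v v = 0)
    (hnd : ∀ v : V, (∀ w : V, β v w = 0) → v = 0)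
    (b : Basis (Fin k ⊕ Fin k) 𝔽 V)
    (hee : ∀ i j, β (b (Sum.inl i)) (b (Sum.inl j)) = 0)
    (hff : ∀ i j, β (b (Sum.inr i)) (b (Sum.inr j)) = 0)
    (hef : ∀ i j, β (b (Sum.inl i)) (b (Sum.inr j)) = if i = j then 1 else 0)
    (Ω : Finset (Submodule 𝔽 V))
    (hΩdim : ∀ W ∈ Ω, finrank 𝔽 W = k)
    (hΩL : ∀ W ∈ Ω, (Submodule.span 𝔽 (Set.range fun i => b (Sum.inl i))) ⊓ W = ⊥) :
    ∃ ε : ℝ, 0 < ε ∧ ∀ μ : Fin k → 𝔽, (∀ i, (0 : ℝ) ≤ (μ i : ℝ) ∧ (μ i : ℝ) ≤ ε) →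
      ∀ W ∈ Ω, IsCompl (Submodule.span 𝔽
        (Set.range fun i => (1 - μ i) • b (Sum.inl i) + μ i • b (Sum.inr i))) W :=
  kmu_eventually_transversal_to_Omega_general 𝔽 V k b Ω hΩdim hΩL
end

section
/- Let 𝔽 be a subfield of ℝ, let (V, β) be a symplectic space over 𝔽 of dimension 2k, and let Ω be a finite collection of subspaces of V each of dimension at most k. Then there exists a symplectic basis e_1, f̂_1, …, e_k, f̂_k of V such that every subspace associated to this basis has trivial intersection with every subspace W ∈ Ω. -/
/-!
Induction on `k`. Over an infinite field a vector space is not a finite union of proper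
subspaces, so one can pick a hyperbolic pair `e, f` (`β e f = 1`) such that each of `e`, `f`,
`e + f` lies outside every `W ∈ Ω` and outside the orthogonal of every nonzero `W ∈ Ω`.
The first vector `l` of an associated family is one of these three, and the remaining ones lie
in the symplectic complement `U` of `span {e, f}`. A vector of `W` in `span {l} ⊔ U` is orthogonal
to `l`, and `l` is not orthogonal to `W`, so the projection along `span {e, f}` of
`W ⊓ (span {l} ⊔ U)` to `U` has dimension at most `k - 1`. Applying the induction hypothesis in
`U` to these projections, an element `a • l + u` of `W` must have `u = 0`, and then `a = 0`
because `l ∉ W`.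
-/

open Module Submodule LinearMap

section

variable {𝔽 V : Type*} [Field 𝔽] [AddCommGroup V] [Module 𝔽 V]

theorem exists_forall_notMem_of_ne_top [Infinite 𝔽] (s : Finset (Submodule 𝔽 V))
    (hs : ∀ p ∈ s, p ≠ ⊤) : ∃ v : V, ∀ p ∈ s, v ∉ p := by
  obtain ⟨v, hv⟩ := Set.ne_univ_iff_exists_notMem _ |>.mp <|
    Subspace.biUnion_ne_univ_of_top_notMem fun h => hs ⊤ h rfl
  exact ⟨v, fun p hp hvp => hv (Set.mem_biUnion hp hvp)⟩

theorem exists_forall_add_smul_notMem [Infinite 𝔽] (s : Finset (Submodule 𝔽 V)) (C : Finset V)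
    {u : V} (hu : ∀ p ∈ s, u ∉ p) : ∃ t : 𝔽, ∀ p ∈ s, ∀ c ∈ C, c + t • u ∉ p := by
  have hfin : (⋃ p ∈ s, ⋃ c ∈ C, {t : 𝔽 | c + t • u ∈ p}).Finite := by
    refine s.finite_toSet.biUnion fun p hp => C.finite_toSet.biUnion fun c _ => ?_
    refine Set.Subsingleton.finite fun t₁ h₁ t₂ h₂ => by_contra fun hne => hu p hp ?_
    have : (t₁ - t₂) • u ∈ p := by
      simpa [sub_smul, add_sub_add_left_eq_sub] using p.sub_mem h₁ h₂
    exact (p.smul_mem_iff (sub_ne_zero.mpr hne)).mp this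
  obtain ⟨t, ht⟩ := hfin.infinite_compl.nonempty
  exact ⟨t, fun p hp c hc hmem => ht (Set.mem_biUnion hp (Set.mem_biUnion hc hmem))⟩

theorem Submodule.span_singleton_sup_map_subtype_inf_eq_bot {U W : Submodule 𝔽 V}
    (π : V →ₗ[𝔽] U) (hπ : ∀ u : U, π u = u) {l : V} (hl : π l = 0) (hlW : l ∉ W)
    {S : Submodule 𝔽 U} (hS : S ⊓ (W ⊓ (span 𝔽 {l} ⊔ U)).map π = ⊥) :
    (span 𝔽 {l} ⊔ S.map U.subtype) ⊓ W = ⊥ := by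
  refine eq_bot_iff.mpr fun x ⟨hx, hxW⟩ => ?_
  obtain ⟨_, ha, _, ⟨s, hs, rfl⟩, rfl⟩ := mem_sup.mp hx
  obtain ⟨a, rfl⟩ := mem_span_singleton.mp ha
  have hπx : π (a • l + s) = s := by simp [hl, hπ]
  have hs0 : s = 0 := by
    refine (mem_bot 𝔽).mp (hS ▸ mem_inf.mpr ⟨hs, hπx ▸ mem_map_of_mem ⟨hxW, ?_⟩⟩)
    exact add_mem_sup (smul_mem _ _ (mem_span_singleton_self l)) s.2
  subst hs0
  rw [map_zero, add_zero] at hxW ⊢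
  by_cases ha : a = 0
  · simp [ha]
  · exact absurd ((W.smul_mem_iff ha).mp hxW) hlW

def IsAssociated {ι : Type*} (e f lam : ι → V) : Prop :=
  ∀ i, lam i ∈ ({e i, f i, e i + f i} : Set V)

theorem isAssociated_cons_iff {k : ℕ} {e₀ f₀ : V} {e f : Fin k → V} {lam : Fin (k + 1) → V} :
    IsAssociated (Fin.cons e₀ e : Fin (k + 1) → V) (Fin.cons f₀ f) lam ↔
      lam 0 ∈ ({e₀, f₀, e₀ + f₀} : Set V) ∧ IsAssociated e f (Fin.tail lam) :=
  Fin.forall_fin_succ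

theorem IsAssociated.exists_eq_comp {V' ι : Type*} [AddCommGroup V'] [Module 𝔽 V']
    (g : V' →ₗ[𝔽] V) {e f : ι → V'} {lam : ι → V} (h : IsAssociated (g ∘ e) (g ∘ f) lam) :
    ∃ μ : ι → V', IsAssociated e f μ ∧ g ∘ μ = lam := by
  have (i : ι) : ∃ x ∈ ({e i, f i, e i + f i} : Set V'), g x = lam i := by
    rcases h i with h | h | h
    exacts [⟨e i, by simp, h.symm⟩, ⟨f i, by simp, h.symm⟩,
      ⟨e i + f i, by simp, by simpa using h.symm⟩]
  choose μ hμ hgμ using this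
  exact ⟨μ, hμ, funext hgμ⟩

namespace LinearMap.BilinForm

structure IsSymplecticFamily (β : LinearMap.BilinForm 𝔽 V) {ι : Type*} [DecidableEq ι]
    (e f : ι → V) : Prop where
  left_left : ∀ i j, β (e i) (e j) = 0
  right_right : ∀ i j, β (f i) (f j) = 0
  left_right : ∀ i j, β (e i) (f j) = if i = j then 1 else 0

variable {β : LinearMap.BilinForm 𝔽 V}

theorem IsSymplecticFamily.linearIndependent {ι : Type*} [DecidableEq ι] [Fintype ι]
    {e f : ι → V} (h : β.IsSymplecticFamily e f) : LinearIndependent 𝔽 (Sum.elim e f) := by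
  refine Fintype.linearIndependent_iff.mpr fun g hg => ?_
  rw [Fintype.sum_sum_type] at hg
  rintro (j | j)
  · simpa [map_sum, h.left_right, h.right_right] using congrArg (fun v => β v (f j)) hg
  · simpa [map_sum, h.left_right, h.left_left] using congrArg (β (e j)) hg

theorem orthogonal_ne_top (hsep : β.SeparatingLeft) {W : Submodule 𝔽 V} (hW : W ≠ ⊥) :
    β.orthogonal W ≠ ⊤ := by
  obtain ⟨w, hwW, hw⟩ := W.ne_bot_iff.mp hW
  obtain ⟨v, hv⟩ : ∃ v, β w v ≠ 0 := by
    by_contra! h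
    exact hw (hsep w h)
  exact fun h => hv ((mem_orthogonal_iff.mp (h ▸ mem_top : v ∈ β.orthogonal W)) w hwW)

theorem exists_hyperbolic_pair_forall_notMem [Infinite 𝔽] [Nontrivial V] (hβ : β.IsAlt)
    (hsep : β.SeparatingLeft) (s : Finset (Submodule 𝔽 V)) (hs : ∀ p ∈ s, p ≠ ⊤) :
    ∃ e f : V, β e f = 1 ∧ ∀ l ∈ ({e, f, e + f} : Set V), ∀ p ∈ s, l ∉ p := by
  classical
  obtain ⟨e, he⟩ := exists_forall_notMem_of_ne_top (insert ⊥ s) (by simpa using hs)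
  have he0 : e ≠ 0 := fun h => he ⊥ (s.mem_insert_self ⊥) (h ▸ zero_mem ⊥)
  obtain ⟨w, hw⟩ : ∃ w, β e w ≠ 0 := by
    by_contra! h
    exact he0 (hsep e h)
  -- `e` is isotropic, so moving `f₀` along `e` keeps `β e f₀ = 1`
  set f₀ := (β e w)⁻¹ • w
  obtain ⟨t, ht⟩ := exists_forall_add_smul_notMem s {f₀, e + f₀} fun p hp => he p (by simp [hp])
  refine ⟨e, f₀ + t • e, by simp [f₀, hw, hβ.self_eq_zero], ?_⟩
  rintro l (rfl | rfl | rfl) p hp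
  · exact he p (by simp [hp])
  · exact ht p hp f₀ (by simp)
  · simpa [add_assoc] using ht p hp (e + f₀) (by simp)

theorem finrank_inf_ker_le [FiniteDimensional 𝔽 V] (hβ : β.IsAlt) {W : Submodule 𝔽 V} {l : V}
    {k : ℕ} (hW : finrank 𝔽 W ≤ k + 1) (hl : W ≠ ⊥ → l ∉ β.orthogonal W) :
    finrank 𝔽 ↥(W ⊓ LinearMap.ker (β l)) ≤ k := by
  by_cases hW0 : W = ⊥
  · subst hW0
    rw [bot_inf_eq, finrank_bot]
    exact k.zero_le
  obtain ⟨w, hwW, hw⟩ : ∃ w ∈ W, β w l ≠ 0 := by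
    simpa [mem_orthogonal_iff] using hl hW0
  have hlt : W ⊓ LinearMap.ker (β l) < W :=
    inf_lt_left.mpr fun h => hw (hβ.eq_iff.mp (mem_ker.mp (h hwW)))
  have := Submodule.finrank_lt_finrank_of_lt hlt
  omega

section HyperbolicPair

variable (hβ : β.IsAlt) {e f : V} (hef : β e f = 1)
include hβ hef

theorem apply_swap_eq_neg_one : β f e = -1 := by
  rw [← hβ.neg_eq, hef]

def projKerInfKer : V →ₗ[𝔽] ↥(LinearMap.ker (β e) ⊓ LinearMap.ker (β f)) :=
  (LinearMap.id - (β e).smulRight f + (β f).smulRight e).codRestrict _ fun v => by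
    simp [hef, apply_swap_eq_neg_one hβ hef, hβ.self_eq_zero]

theorem coe_projKerInfKer (v : V) :
    (projKerInfKer hβ hef v : V) = v - β e v • f + β f v • e := rfl

theorem projKerInfKer_apply_coe (u : ↥(LinearMap.ker (β e) ⊓ LinearMap.ker (β f))) :
    projKerInfKer hβ hef u = u := by
  obtain ⟨u, hue, huf⟩ := u
  ext
  simp [coe_projKerInfKer, mem_ker.mp hue, mem_ker.mp huf]

theorem projKerInfKer_eq_zero {l : V} (hl : l ∈ ({e, f, e + f} : Set V)) :
    projKerInfKer hβ hef l = 0 := by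
  ext
  rcases hl with rfl | rfl | rfl <;>
    simp [coe_projKerInfKer, hef, apply_swap_eq_neg_one hβ hef, hβ.self_eq_zero]

omit hef in
theorem span_singleton_sup_ker_inf_ker_le {l : V} (hl : l ∈ ({e, f, e + f} : Set V)) :
    span 𝔽 {l} ⊔ (LinearMap.ker (β e) ⊓ LinearMap.ker (β f)) ≤ LinearMap.ker (β l) := by
  refine sup_le ((span_singleton_le_iff_mem _ _).mpr (hβ.self_eq_zero l)) fun u ⟨hue, huf⟩ => ?_
  rcases hl with rfl | rfl | rfl <;> simp_all

theorem finrank_map_projKerInfKer_le [FiniteDimensional 𝔽 V] {l : V}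
    (hl : l ∈ ({e, f, e + f} : Set V)) {W : Submodule 𝔽 V} {k : ℕ} (hW : finrank 𝔽 W ≤ k + 1)
    (hlW : W ≠ ⊥ → l ∉ β.orthogonal W) :
    finrank 𝔽 ↥((W ⊓ (span 𝔽 {l} ⊔ (LinearMap.ker (β e) ⊓ LinearMap.ker (β f)))).map
      (projKerInfKer hβ hef)) ≤ k :=
  calc _ ≤ finrank 𝔽 ↥(W ⊓ (span 𝔽 {l} ⊔ (LinearMap.ker (β e) ⊓ LinearMap.ker (β f)))) :=
        finrank_map_le _ _
    _ ≤ finrank 𝔽 ↥(W ⊓ LinearMap.ker (β l)) :=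
        Submodule.finrank_mono (inf_le_inf_left _ (span_singleton_sup_ker_inf_ker_le hβ hl))
    _ ≤ k := finrank_inf_ker_le hβ hW hlW

theorem finrank_ker_inf_ker_add_two [FiniteDimensional 𝔽 V] :
    finrank 𝔽 ↥(LinearMap.ker (β e) ⊓ LinearMap.ker (β f)) + 2 = finrank 𝔽 V := by
  have hsurj : Function.Surjective ((β e).prod (β f)) := fun ⟨a, b⟩ =>
    ⟨a • f - b • e, by simp [hef, apply_swap_eq_neg_one hβ hef, hβ.self_eq_zero]⟩
  have := LinearMap.finrank_range_add_finrank_ker ((β e).prod (β f))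
  rw [range_eq_top.mpr hsurj, finrank_top, finrank_prod, finrank_self, ker_prod] at this
  omega

theorem separatingLeft_restrict_ker_inf_ker (hsep : β.SeparatingLeft) :
    (β.restrict (LinearMap.ker (β e) ⊓ LinearMap.ker (β f))).SeparatingLeft := by
  rintro ⟨u, hue, huf⟩ hu
  ext
  refine hsep u fun v => ?_
  have hv : v = β e v • f - β f v • e + projKerInfKer hβ hef v := by
    rw [coe_projKerInfKer]
    abel
  have hu_e : β u e = 0 := hβ.eq_iff.mp (mem_ker.mp hue)
  have hu_f : β u f = 0 := hβ.eq_iff.mp (mem_ker.mp huf)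
  rw [hv, map_add, map_sub, map_smul, map_smul, hu_e, hu_f]
  simpa using hu (projKerInfKer hβ hef v)

theorem IsSymplecticFamily.cons {k : ℕ}
    {e' f' : Fin k → ↥(LinearMap.ker (β e) ⊓ LinearMap.ker (β f))}
    (h : (β.restrict _).IsSymplecticFamily e' f') :
    β.IsSymplecticFamily (Fin.cons e (Subtype.val ∘ e')) (Fin.cons f (Subtype.val ∘ f')) := by
  have hU (u : ↥(LinearMap.ker (β e) ⊓ LinearMap.ker (β f))) :
      β e u = 0 ∧ β f u = 0 ∧ β u e = 0 ∧ β u f = 0 := by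
    obtain ⟨hue, huf⟩ := u.2
    exact ⟨hue, huf, hβ.eq_iff.mp hue, hβ.eq_iff.mp huf⟩
  have hee := h.left_left
  have hff := h.right_right
  have hef' := h.left_right
  simp only [BilinForm.restrict_apply, domRestrict_apply] at hee hff hef'
  constructor <;> intro i j <;> cases i using Fin.cases <;> cases j using Fin.cases <;>
    simp [hU, hef, hee, hff, hef', hβ.self_eq_zero, Fin.succ_ne_zero, (Fin.succ_ne_zero _).symm]

end HyperbolicPair

theorem exists_isSymplecticFamily_forall_isAssociated_inf_eq_bot [Infinite 𝔽]
    [FiniteDimensional 𝔽 V] (k : ℕ) (hβ : β.IsAlt) (hsep : β.SeparatingLeft)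
    (hdim : finrank 𝔽 V = 2 * k) (Ω : Finset (Submodule 𝔽 V))
    (hΩ : ∀ W ∈ Ω, finrank 𝔽 W ≤ k) :
    ∃ e f : Fin k → V, β.IsSymplecticFamily e f ∧
      ∀ lam, IsAssociated e f lam → ∀ W ∈ Ω, span 𝔽 (Set.range lam) ⊓ W = ⊥ := by
  induction k generalizing V with
  | zero =>
    refine ⟨Fin.elim0, Fin.elim0, ⟨fun i => i.elim0, fun i => i.elim0, fun i => i.elim0⟩,
      fun lam _ W _ => ?_⟩
    simp
  | succ k ih =>
    classical
    have : Nontrivial V := Module.nontrivial_of_finrank_pos (R := 𝔽) (by omega)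
    have hproper : ∀ p ∈ Ω ∪ (Ω.filter (· ≠ ⊥)).image β.orthogonal, p ≠ ⊤ := by
      simp only [Finset.mem_union, Finset.mem_image, Finset.mem_filter]
      rintro p (hp | ⟨W, ⟨-, hW⟩, rfl⟩)
      · intro h
        have := hΩ p hp
        rw [h, finrank_top] at this
        omega
      · exact orthogonal_ne_top hsep hW
    obtain ⟨e, f, hef, hL⟩ := exists_hyperbolic_pair_forall_notMem hβ hsep _ hproper
    set U := LinearMap.ker (β e) ⊓ LinearMap.ker (β f)
    set π := projKerInfKer hβ hef
    have hU : finrank 𝔽 U = 2 * k := by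
      have : finrank 𝔽 U + 2 = finrank 𝔽 V := finrank_ker_inf_ker_add_two hβ hef
      omega
    -- what the rest of the family must avoid, for each choice `l` of its first vector
    set Ω' : Finset (Submodule 𝔽 U) := Finset.image₂ (fun l W => (W ⊓ (span 𝔽 {l} ⊔ U)).map π)
      {e, f, e + f} Ω
    have hΩ' : ∀ W' ∈ Ω', finrank 𝔽 W' ≤ k := by
      simp only [Ω', Finset.forall_mem_image₂]
      intro l hl W hW
      replace hl : l ∈ ({e, f, e + f} : Set V) := by simpa using hl
      refine finrank_map_projKerInfKer_le hβ hef hl (hΩ W hW) fun hW0 => hL l hl _ ?_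
      exact Finset.mem_union_right _ (Finset.mem_image_of_mem _ (Finset.mem_filter.mpr ⟨hW, hW0⟩))
    obtain ⟨e', f', hsymp, havoid⟩ := ih (β := β.restrict U) (fun u => hβ u)
      (separatingLeft_restrict_ker_inf_ker hβ hef hsep) hU Ω' hΩ'
    refine ⟨Fin.cons e (Subtype.val ∘ e'), Fin.cons f (Subtype.val ∘ f'), hsymp.cons hβ hef, ?_⟩
    intro lam hlam W hW
    rw [isAssociated_cons_iff] at hlam
    obtain ⟨μ, hμ, hμlam⟩ := hlam.2.exists_eq_comp U.subtype
    rw [← Fin.cons_self_tail lam, Fin.range_cons, span_insert, ← hμlam, Set.range_comp, span_image]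
    exact span_singleton_sup_map_subtype_inf_eq_bot π (projKerInfKer_apply_coe hβ hef)
      (projKerInfKer_eq_zero hβ hef hlam.1) (hL _ hlam.1 W (by simp [hW]))
      (havoid μ hμ _ (Finset.mem_image₂_of_mem (by simpa using hlam.1) hW))

end LinearMap.BilinForm

end

/-- Let `(V, β)` be a symplectic space of dimension `2k` over a subfield `𝔽` of `ℝ` and let
`Ω` be a finite collection of subspaces of `V`, each of dimension at most `k`.  Then there is
a symplectic basis `e₁, f̂₁, …, e_k, f̂_k` of `V` (here `b (.inl i) = eᵢ`, `b (.inr i) = f̂ᵢ`)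
such that every subspace associated to it — every span of vectors `λ₁, …, λ_k` with
`λᵢ ∈ {eᵢ, f̂ᵢ, eᵢ + f̂ᵢ}` — has trivial intersection with every `W ∈ Ω`. -/
theorem exists_symplectic_basis_associated_subspaces_avoiding_Omega
    (𝔽 : Subfield ℝ) (V : Type) [AddCommGroup V] [Module 𝔽 V] [FiniteDimensional 𝔽 V]
    (k : ℕ) (hdim : finrank 𝔽 V = 2 * k)
    (β : V →ₗ[𝔽] V →ₗ[𝔽] 𝔽)
    (halt : ∀ v : V, β v v = 0)
    (hnd : ∀ v : V, (∀ w : V, β v w = 0) → v = 0)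
    (Ω : Finset (Submodule 𝔽 V)) (hΩ : ∀ W ∈ Ω, finrank 𝔽 W ≤ k) :
    ∃ b : Basis (Fin k ⊕ Fin k) 𝔽 V,
      (∀ i j, β (b (Sum.inl i)) (b (Sum.inl j)) = 0) ∧
      (∀ i j, β (b (Sum.inr i)) (b (Sum.inr j)) = 0) ∧
      (∀ i j, β (b (Sum.inl i)) (b (Sum.inr j)) = if i = j then 1 else 0) ∧
      ∀ lam : Fin k → V,
        (∀ i, lam i = b (Sum.inl i) ∨ lam i = b (Sum.inr i) ∨
          lam i = b (Sum.inl i) + b (Sum.inr i)) →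
        ∀ W ∈ Ω, Submodule.span 𝔽 (Set.range lam) ⊓ W = ⊥ := by
  obtain ⟨e, f, hsymp, havoid⟩ :=
    LinearMap.BilinForm.exists_isSymplecticFamily_forall_isAssociated_inf_eq_bot
      k halt hnd hdim Ω hΩ
  let b := basisOfLinearIndependentOfCardEqFinrank' (Sum.elim e f) hsymp.linearIndependent
    (by simp [hdim, two_mul])
  refine ⟨b, by simpa [b] using hsymp.left_left, by simpa [b] using hsymp.right_right,
    by simpa [b] using hsymp.left_right, fun lam hlam => havoid lam fun i => ?_⟩
  simpa [b] using hlam i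
end

section
/- Let k ≥ 1 be an integer, let m_1, …, m_k be nonzero integers, let H be the generalized Heisenberg group of rank k with parameters m_1, …, m_k, and let A be the right ℤH-module presented by generators a_1, a_2 and relations a_1·z = a_1 + a_2, a_2·z = a_1 + 2a_2, and a_i·y_j = a_i + a_i·x_j for i ∈ {1,2} and 1 ≤ j ≤ k. Let χ : H → (ℝ,+) be a group homomorphism and suppose that for some index i ∈ {1,…,k} the minimum of the three real numbers 0, χ(x_i), χ(y_i) is attained by exactly one of them. Then A is finitely generated as a module over the monoid ring ℤ[H_χ], where H_χ = {h ∈ H : χ(h) ≥ 0}. -/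
set_option synthInstance.maxHeartbeats 1000000
set_option maxHeartbeats 1000000

/-! Generators for the generalized Heisenberg group of rank `k`:
`Sum.inl (Sum.inl i)` is `xᵢ`, `Sum.inl (Sum.inr i)` is `yᵢ`, and `Sum.inr ()` is `z`. -/

/-- The free-group generator `xᵢ`. -/
def heisX {k : ℕ} (i : Fin k) : FreeGroup ((Fin k ⊕ Fin k) ⊕ Unit) :=
  FreeGroup.of (Sum.inl (Sum.inl i))

/-- The free-group generator `yᵢ`. -/
def heisY {k : ℕ} (i : Fin k) : FreeGroup ((Fin k ⊕ Fin k) ⊕ Unit) :=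
  FreeGroup.of (Sum.inl (Sum.inr i))

/-- The free-group generator `z`. -/
def heisZ {k : ℕ} : FreeGroup ((Fin k ⊕ Fin k) ⊕ Unit) :=
  FreeGroup.of (Sum.inr ())

open scoped commutatorElement

/-- The relators of the generalized Heisenberg group of rank `k` with parameters `m`. -/
def heisenbergRels (k : ℕ) (m : Fin k → ℤ) : Set (FreeGroup ((Fin k ⊕ Fin k) ⊕ Unit)) :=
  {r | (∃ i j : Fin k, r = ⁅heisX i, heisX j⁆) ∨ (∃ i j : Fin k, r = ⁅heisY i, heisY j⁆) ∨
    (∃ i j : Fin k, r = ⁅heisX i, heisY j⁆ * (heisZ ^ (if i = j then m i else 0))⁻¹) ∨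
    (∃ i : Fin k, r = ⁅heisX i, heisZ⁆) ∨ (∃ i : Fin k, r = ⁅heisY i, heisZ⁆)}

/-- The generalized Heisenberg group of rank `k` with parameters `m`. -/
abbrev Heisenberg (k : ℕ) (m : Fin k → ℤ) : Type :=
  PresentedGroup (heisenbergRels k m)

/-- The image of the generator `xᵢ` in the Heisenberg group. -/
def hXg (k : ℕ) (m : Fin k → ℤ) (i : Fin k) : Heisenberg k m :=
  PresentedGroup.of (Sum.inl (Sum.inl i))

/-- The image of the generator `yᵢ` in the Heisenberg group. -/
def hYg (k : ℕ) (m : Fin k → ℤ) (i : Fin k) : Heisenberg k m :=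
  PresentedGroup.of (Sum.inl (Sum.inr i))

/-- The image of the generator `z` in the Heisenberg group. -/
def hZg (k : ℕ) (m : Fin k → ℤ) : Heisenberg k m :=
  PresentedGroup.of (Sum.inr ())

/-- The integral group ring `ℤH` of the Heisenberg group `H`. -/
abbrev HZR (k : ℕ) (m : Fin k → ℤ) : Type := MonoidAlgebra ℤ (Heisenberg k m)

/-- The relators of the right `ℤH`-module `A` presented by generators `a₁ = (1,0)`,
`a₂ = (0,1)` and relations `a₁·z = a₁ + a₂`, `a₂·z = a₁ + 2a₂` and
`aᵢ·yⱼ = aᵢ + aᵢ·xⱼ`; the free right `ℤH`-module on `a₁, a₂` is `ℤH × ℤH`, viewed as a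
left module over the opposite ring `(ℤH)ᵐᵒᵖ`. -/
noncomputable def heisModRelators (k : ℕ) (m : Fin k → ℤ) : Set (HZR k m × HZR k m) :=
  {((MonoidAlgebra.of ℤ (Heisenberg k m) (hZg k m) - 1, -1) : HZR k m × HZR k m),
   ((-1, MonoidAlgebra.of ℤ (Heisenberg k m) (hZg k m) - 2) : HZR k m × HZR k m)} ∪
  (Set.range fun j : Fin k =>
    ((MonoidAlgebra.of ℤ (Heisenberg k m) (hYg k m j) - 1 -
        MonoidAlgebra.of ℤ (Heisenberg k m) (hXg k m j), 0) : HZR k m × HZR k m)) ∪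
  (Set.range fun j : Fin k =>
    ((0, MonoidAlgebra.of ℤ (Heisenberg k m) (hYg k m j) - 1 -
        MonoidAlgebra.of ℤ (Heisenberg k m) (hXg k m j)) : HZR k m × HZR k m))

/-- The submodule of relations, a right `ℤH`-submodule (i.e. an `(ℤH)ᵐᵒᵖ`-submodule) of the
free right module `ℤH × ℤH`. -/
noncomputable def heisModSub (k : ℕ) (m : Fin k → ℤ) :
    Submodule (HZR k m)ᵐᵒᵖ (HZR k m × HZR k m) :=
  Submodule.span (HZR k m)ᵐᵒᵖ (heisModRelators k m)

/-- The right `ℤH`-module `A` presented by generators `a₁, a₂` and relations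
`a₁·z = a₁ + a₂`, `a₂·z = a₁ + 2a₂`, `aᵢ·yⱼ = aᵢ + aᵢ·xⱼ`. -/
abbrev HeisMod (k : ℕ) (m : Fin k → ℤ) : Type :=
  (HZR k m × HZR k m) ⧸ heisModSub k m

/-- The action of the Heisenberg group `H` on the abelian group `A = HeisMod k m` coming
from the right module structure (`h` acts as right multiplication by `h⁻¹`, so that this is
a homomorphism), expressed as `H →* MulAut (Multiplicative A)` in order to form the split
extension `A ⋊ H`. -/
noncomputable def heisAction (k : ℕ) (m : Fin k → ℤ) :
    Heisenberg k m →* MulAut (Multiplicative (HeisMod k m)) where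
  toFun h :=
    { toFun := fun a => Multiplicative.ofAdd
        (MulOpposite.op (MonoidAlgebra.of ℤ (Heisenberg k m) h⁻¹) • a.toAdd)
      invFun := fun a => Multiplicative.ofAdd
        (MulOpposite.op (MonoidAlgebra.of ℤ (Heisenberg k m) h) • a.toAdd)
      left_inv := fun a => by
        simp [smul_smul, ← MulOpposite.op_mul, ← map_mul, ← MonoidAlgebra.one_def]
      right_inv := fun a => by
        simp [smul_smul, ← MulOpposite.op_mul, ← map_mul, ← MonoidAlgebra.one_def]
      map_mul' := fun a b => by
        simp [smul_add] }
  map_one' := by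
    ext a
    simp [← MonoidAlgebra.one_def]
  map_mul' := fun g h => by
    ext a
    simp [mul_inv_rev, smul_smul, ← MulOpposite.op_mul, MonoidAlgebra.single_mul_single]

/-! Write `a·g` for `op (of g) • a`. For a generator `a` of `A` and `x = xᵢ`, `y = yᵢ`, the
relation `a·y = a + a·x` gives, for every `w ∈ H`, a two-out-of-three rule for `a·w, a·xw, a·yw`
lying in an additive subgroup `B`. Because the minimum of `0, χ x, χ y` is attained once, the
triangle `{w, xw, yw}` has a unique `χ`-lowest vertex, and the other two lie higher by at least a
fixed `δ > 0`. If `B` is `ℤ[H_χ]`-stable and contains `a`, it contains `a·g` whenever `χ g ≥ 0`,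
and descending in steps of `δ` gives `a·g ∈ B` for all `g`. Hence `B ⊇ a₁·ℤH + a₂·ℤH = A`. -/

theorem forall_of_nonneg_of_step {α : Type*} (f : α → ℝ) {P : α → Prop} {δ : ℝ} (hδ : 0 < δ)
    (hbase : ∀ a, 0 ≤ f a → P a) (hstep : ∀ a, (∀ b, f a + δ ≤ f b → P b) → P a) (a : α) :
    P a := by
  have level : ∀ n : ℕ, ∀ a, -(n * δ) ≤ f a → P a := by
    intro n
    induction n with
    | zero => simpa using hbase
    | succ n ih =>
      refine fun a ha => hstep a fun b hb => ih b ?_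
      push_cast at ha
      linarith
  obtain ⟨n, hn⟩ := Archimedean.arch (-f a) hδ
  exact level n a (by rw [nsmul_eq_mul] at hn; linarith)

section TwoOfThree

variable {G : Type*} [Group G] (χ : G → ℝ) (hχ : ∀ a b, χ (a * b) = χ a + χ b)
  {x y : G} {C : Set G} (hC : ∀ g, 0 ≤ χ g → g ∈ C)
include hχ hC

theorem forall_mem_of_two_of_three_of_pos (hx : 0 < χ x) (hy : 0 < χ y)
    (htri : ∀ w, x * w ∈ C → y * w ∈ C → w ∈ C) (g : G) : g ∈ C := by
  refine forall_of_nonneg_of_step χ (lt_min hx hy) hC (fun w hw => htri w ?_ ?_) g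
  · exact hw _ (by rw [hχ]; linarith [min_le_left (χ x) (χ y)])
  · exact hw _ (by rw [hχ]; linarith [min_le_right (χ x) (χ y)])

theorem forall_mem_of_two_of_three_of_lt (hx : χ x < 0) (hxy : χ x < χ y)
    (htri : ∀ w, w ∈ C → y * w ∈ C → x * w ∈ C) (g : G) : g ∈ C := by
  refine forall_of_nonneg_of_step χ (lt_min (neg_pos.2 hx) (sub_pos.2 hxy)) hC
    (fun w hw => ?_) g
  have hχinv : χ (x⁻¹ * w) = χ w - χ x := by
    linarith [hχ x (x⁻¹ * w), congrArg χ (mul_inv_cancel_left x w)]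
  have hlow := htri (x⁻¹ * w) (hw _ ?_) (hw _ ?_)
  · rwa [mul_inv_cancel_left] at hlow
  · rw [hχinv]
    linarith [min_le_left (-χ x) (χ y - χ x)]
  · rw [hχ, hχinv]
    linarith [min_le_right (-χ x) (χ y - χ x)]

theorem forall_mem_of_two_of_three
    (hmin : (0 < χ x ∧ 0 < χ y) ∨ (χ x < 0 ∧ χ x < χ y) ∨ (χ y < 0 ∧ χ y < χ x))
    (h₁ : ∀ w, x * w ∈ C → y * w ∈ C → w ∈ C) (h₂ : ∀ w, w ∈ C → y * w ∈ C → x * w ∈ C)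
    (h₃ : ∀ w, w ∈ C → x * w ∈ C → y * w ∈ C) (g : G) : g ∈ C := by
  rcases hmin with ⟨hx, hy⟩ | ⟨hx, hxy⟩ | ⟨hy, hyx⟩
  · exact forall_mem_of_two_of_three_of_pos χ hχ hC hx hy h₁ g
  · exact forall_mem_of_two_of_three_of_lt χ hχ hC hx hxy h₂ g
  · exact forall_mem_of_two_of_three_of_lt χ hχ hC hy hyx h₃ g

end TwoOfThree

section RightModule

open MulOpposite MonoidAlgebra

variable {G M : Type*} [Group G] [AddCommGroup M] [Module (MonoidAlgebra ℤ G)ᵐᵒᵖ M]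

theorem op_of_smul_op_of_smul (g h : G) (a : M) :
    op (of ℤ G g) • op (of ℤ G h) • a = op (of ℤ G (h * g)) • a := by
  rw [smul_smul, ← op_mul, ← map_mul]

theorem smul_mem_of_forall_op_of_smul_mem {B : AddSubgroup M} {a : M}
    (hB : ∀ g : G, op (of ℤ G g) • a ∈ B) (r : (MonoidAlgebra ℤ G)ᵐᵒᵖ) : r • a ∈ B := by
  induction r using MulOpposite.rec' with | _ r
  induction r using MonoidAlgebra.induction_on with
  | of g => exact hB g
  | add r s hr hs => rw [op_add, add_smul]; exact add_mem hr hs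
  | smul n r hr => rw [op_smul, smul_assoc]; exact zsmul_mem hr n

theorem op_of_smul_mem_of_rel (χ : G → ℝ) (hχ : ∀ a b, χ (a * b) = χ a + χ b) {x y : G}
    (hmin : (0 < χ x ∧ 0 < χ y) ∨ (χ x < 0 ∧ χ x < χ y) ∨ (χ y < 0 ∧ χ y < χ x))
    {B : AddSubgroup M} (hB : ∀ h : G, 0 ≤ χ h → ∀ b ∈ B, op (of ℤ G h) • b ∈ B)
    {a : M} (ha : a ∈ B) (hrel : op (of ℤ G y) • a = a + op (of ℤ G x) • a) (g : G) :
    op (of ℤ G g) • a ∈ B := by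
  have htri (w : G) :
      op (of ℤ G (y * w)) • a = op (of ℤ G w) • a + op (of ℤ G (x * w)) • a := by
    rw [← op_of_smul_op_of_smul, hrel, smul_add, op_of_smul_op_of_smul]
  refine forall_mem_of_two_of_three (C := {g | op (of ℤ G g) • a ∈ B}) χ hχ
    (fun g hg => hB g hg a ha) hmin ?_ ?_ ?_ g <;> intro w <;> simp only [Set.mem_ofPred_eq, htri]
  · exact fun hx hy => (add_mem_cancel_right hx).1 hy
  · exact fun hw hy => (add_mem_cancel_left hw).1 hy
  · exact add_mem

end RightModule

section HeisMod

open MulOpposite MonoidAlgebra Submodule.Quotient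

variable {k : ℕ} {m : Fin k → ℤ}

theorem heisMod_mk_eq_smul_add_smul (u v : HZR k m) :
    (mk (u, v) : HeisMod k m) = op u • mk (1, 0) + op v • mk (0, 1) := by
  rw [← mk_smul, ← mk_smul, ← mk_add]
  simp

theorem heisMod_smul_hYg_of_mem (j : Fin k) {p : HZR k m × HZR k m}
    (hp : op (of ℤ _ (hYg k m j) - 1 - of ℤ _ (hXg k m j)) • p ∈ heisModRelators k m) :
    op (of ℤ _ (hYg k m j)) • (mk p : HeisMod k m) = mk p + op (of ℤ _ (hXg k m j)) • mk p := by
  have hrel := (mk_eq_zero (heisModSub k m)).2 (Submodule.subset_span hp)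
  rw [op_sub, op_sub, op_one, sub_smul, sub_smul, one_smul, mk_sub, mk_sub, mk_smul, mk_smul]
    at hrel
  rw [← sub_eq_zero, ← hrel, sub_sub]

theorem heisMod_smul_hYg_fst (j : Fin k) :
    op (of ℤ _ (hYg k m j)) • (mk (1, 0) : HeisMod k m) =
      mk (1, 0) + op (of ℤ _ (hXg k m j)) • mk (1, 0) :=
  heisMod_smul_hYg_of_mem j (Or.inl (Or.inr ⟨j, by simp⟩))

theorem heisMod_smul_hYg_snd (j : Fin k) :
    op (of ℤ _ (hYg k m j)) • (mk (0, 1) : HeisMod k m) =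
      mk (0, 1) + op (of ℤ _ (hXg k m j)) • mk (0, 1) :=
  heisMod_smul_hYg_of_mem j (Or.inr ⟨j, by simp⟩)

end HeisMod

theorem heisMod_fg_over_monoid_ring_of_min_attained_once_general
    (k : ℕ) (m : Fin k → ℤ)
    (χ : Heisenberg k m → ℝ) (hχ : ∀ a b, χ (a * b) = χ a + χ b)
    (hmin : ∃ i : Fin k,
      (0 < χ (hXg k m i) ∧ 0 < χ (hYg k m i)) ∨
      (χ (hXg k m i) < 0 ∧ χ (hXg k m i) < χ (hYg k m i)) ∨
      (χ (hYg k m i) < 0 ∧ χ (hYg k m i) < χ (hXg k m i))) :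
    ∃ S : Finset (HeisMod k m), ∀ B : AddSubgroup (HeisMod k m),
      (∀ h : Heisenberg k m, 0 ≤ χ h → ∀ b ∈ B,
        MulOpposite.op (MonoidAlgebra.of ℤ (Heisenberg k m) h) • b ∈ B) →
      (↑S : Set (HeisMod k m)) ⊆ ↑B → B = ⊤ := by
  classical
  obtain ⟨i, hmin⟩ := hmin
  refine ⟨{Submodule.Quotient.mk (1, 0), Submodule.Quotient.mk (0, 1)}, fun B hB hS => ?_⟩
  have hfst := smul_mem_of_forall_op_of_smul_mem
    (op_of_smul_mem_of_rel χ hχ hmin hB (hS (by simp)) (heisMod_smul_hYg_fst i))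
  have hsnd := smul_mem_of_forall_op_of_smul_mem
    (op_of_smul_mem_of_rel χ hχ hmin hB (hS (by simp)) (heisMod_smul_hYg_snd i))
  refine eq_top_iff.2 fun a _ => ?_
  obtain ⟨⟨u, v⟩, rfl⟩ := Submodule.Quotient.mk_surjective _ a
  rw [heisMod_mk_eq_smul_add_smul]
  exact add_mem (hfst _) (hsnd _)

/-- Let `H` be the generalized Heisenberg group of rank `k ≥ 1` with nonzero parameters `m`
and let `A` be the right `ℤH`-module presented by generators `a₁, a₂` and relations
`a₁·z = a₁ + a₂`, `a₂·z = a₁ + 2a₂`, `aᵢ·yⱼ = aᵢ + aᵢ·xⱼ`.  If `χ : H → (ℝ,+)` is a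
homomorphism such that for some index `i` the minimum of `0, χ(xᵢ), χ(yᵢ)` is attained
exactly once, then `A` is finitely generated as a module over the monoid ring `ℤ[H_χ]` of
the submonoid `H_χ = {h : χ h ≥ 0}`: there is a finite set `S ⊆ A` such that the only
additive subgroup of `A` containing `S` and stable under the (right) action of all
`h ∈ H_χ` is `A` itself. -/
theorem heisMod_fg_over_monoid_ring_of_min_attained_once
    (k : ℕ) (hk : 1 ≤ k) (m : Fin k → ℤ) (hm : ∀ i, m i ≠ 0)
    (χ : Heisenberg k m → ℝ) (hχ : ∀ a b, χ (a * b) = χ a + χ b)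
    (hmin : ∃ i : Fin k,
      (0 < χ (hXg k m i) ∧ 0 < χ (hYg k m i)) ∨
      (χ (hXg k m i) < 0 ∧ χ (hXg k m i) < χ (hYg k m i)) ∨
      (χ (hYg k m i) < 0 ∧ χ (hYg k m i) < χ (hXg k m i))) :
    ∃ S : Finset (HeisMod k m), ∀ B : AddSubgroup (HeisMod k m),
      (∀ h : Heisenberg k m, 0 ≤ χ h → ∀ b ∈ B,
        MulOpposite.op (MonoidAlgebra.of ℤ (Heisenberg k m) h) • b ∈ B) →
      (↑S : Set (HeisMod k m)) ⊆ ↑B → B = ⊤ :=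
  heisMod_fg_over_monoid_ring_of_min_attained_once_general k m χ hχ hmin
end

section
/- Let k ≥ 1 be an integer, let m_1, …, m_k be nonzero integers, let H be the generalized Heisenberg group of rank k with parameters m_1, …, m_k, and let A be the right ℤH-module presented by generators a_1, a_2 and relations a_1·z = a_1 + a_2, a_2·z = a_1 + 2a_2, and a_i·y_j = a_i + a_i·x_j for i ∈ {1,2} and 1 ≤ j ≤ k. Define homomorphisms χ_i, ψ_i, φ_i : H → (ℝ,+) by χ_i(x_j) = δ_{ij}, χ_i(y_j) = 0, ψ_i(x_j) = 0, ψ_i(y_j) = δ_{ij}, χ_i(z) = ψ_i(z) = 0, and φ_i = −χ_i − ψ_i. If χ : H → (ℝ,+) is a homomorphism such that A is NOT finitely generated as a module over the monoid ring ℤ[H_χ] (where H_χ = {h ∈ H : χ(h) ≥ 0}), then there exist, for each i ∈ {1,…,k}, an element λ_i ∈ {χ_i, ψ_i, φ_i} and a nonnegative real number c_i such that χ = c_1 λ_1 + ⋯ + c_k λ_k; in particular χ lies in one of the 3^k convex cones generated by sets of the form {λ_1, …, λ_k} with λ_i ∈ {χ_i, ψ_i, φ_i}. -/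
set_option synthInstance.maxHeartbeats 1000000
set_option maxHeartbeats 1000000

open scoped commutatorElement

/-! Since `z ^ mᵢ` is a commutator, every character vanishes on `z` and is determined by the pairs
`(χ(xᵢ), χ(yᵢ))`. If each pair lies on one of the rays through `(1, 0)`, `(0, 1)`, `(-1, -1)`,
then `χ` is the required combination of the `χᵢ`, `ψᵢ`, `φᵢ`.

Otherwise let `B` be an `H_χ`-stable subgroup of `A` containing `a₁, a₂`, and let
`U = {g | a₁·g, a₂·g ∈ B}`. The group is abelian modulo `⟨z⟩`, and `z` acts on `(a₁, a₂)` by a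
matrix in `GL₂(ℤ)`, so by `aᵢ·yⱼ = aᵢ + aᵢ·xⱼ` any two of `g, g xⱼ, g yⱼ` in `U` force the third
into `U`. For a pair off the rays this gives some `u` with `χ(u) < 0` and `U u ⊆ U`; since `U` is
also stable under `H_χ`, `U = H`, hence `B = A`: `A` is generated by `a₁, a₂` over `ℤ[H_χ]`. -/

theorem PresentedGroup.commutator_mem_of_forall_of {α : Type*} {rels : Set (FreeGroup α)}
    (N : Subgroup (PresentedGroup rels)) [N.Normal]
    (h : ∀ s t, ⁅(PresentedGroup.of s : PresentedGroup rels), PresentedGroup.of t⁆ ∈ N)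
    (g g' : PresentedGroup rels) : ⁅g, g'⁆ ∈ N := by
  let C (b : PresentedGroup rels) : Subgroup (PresentedGroup rels) :=
    (Subgroup.centralizer {QuotientGroup.mk' N b}).comap (QuotientGroup.mk' N)
  have mem_C {a b} : a ∈ C b ↔ ⁅b, a⁆ ∈ N := by
    simp only [C, Subgroup.mem_comap, Subgroup.mem_centralizer_iff_commutator_eq_one,
      Set.mem_singleton_iff, forall_eq]
    rw [← map_commutatorElement, QuotientGroup.mk'_apply, QuotientGroup.eq_one_iff]
  have h_of (s : α) (a : PresentedGroup rels) : ⁅PresentedGroup.of s, a⁆ ∈ N :=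
    mem_C.mp <| PresentedGroup.generated_by _ (C (.of s)) (fun t => mem_C.mpr (h s t)) a
  refine mem_C.mp <| PresentedGroup.generated_by _ (C g) (fun s => mem_C.mpr ?_) g'
  exact commutatorElement_inv (PresentedGroup.of s) g ▸ inv_mem (h_of s g)

def IsCharacter {G : Type*} [Group G] (χ : G → ℝ) : Prop :=
  ∀ a b, χ (a * b) = χ a + χ b

namespace IsCharacter

variable {G : Type*} [Group G] {χ : G → ℝ}

def toMonoidHom (hχ : IsCharacter χ) : G →* Multiplicative ℝ :=
  MonoidHom.mk' (fun g => Multiplicative.ofAdd (χ g)) hχ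

theorem map_zpow (hχ : IsCharacter χ) (g : G) (n : ℤ) : χ (g ^ n) = n * χ g := by
  calc χ (g ^ n) = (hχ.toMonoidHom (g ^ n)).toAdd := rfl
    _ = n * χ g := by rw [_root_.map_zpow, toAdd_zpow, zsmul_eq_mul]; rfl

theorem map_inv (hχ : IsCharacter χ) (g : G) : χ g⁻¹ = -χ g := by
  simpa using hχ.map_zpow g (-1)

theorem map_pow (hχ : IsCharacter χ) (g : G) (n : ℕ) : χ (g ^ n) = n * χ g := by
  simpa using hχ.map_zpow g n

theorem sum {ι : Type*} (s : Finset ι) (c : ι → ℝ) {l : ι → G → ℝ} (hl : ∀ i, IsCharacter (l i)) :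
    IsCharacter fun g => ∑ i ∈ s, c i * l i g := fun a b => by
  simp only [hl _ a b, mul_add, Finset.sum_add_distrib]

theorem ext_presentedGroup {α : Type*} {rels : Set (FreeGroup α)} {χ χ' : PresentedGroup rels → ℝ}
    (hχ : IsCharacter χ) (hχ' : IsCharacter χ') (h : ∀ s, χ (.of s) = χ' (.of s)) : χ = χ' :=
  funext fun g => congrArg Multiplicative.toAdd <|
    DFunLike.congr_fun (PresentedGroup.ext (φ := hχ.toMonoidHom) (ψ := hχ'.toMonoidHom) h) g

end IsCharacter

theorem MonoidAlgebra.map_mem_of_forall_of {G M : Type*} [Monoid G] [AddCommGroup M]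
    (f : MonoidAlgebra ℤ G →+ M) {B : AddSubgroup M}
    (h : ∀ g, f (MonoidAlgebra.of ℤ G g) ∈ B) (u : MonoidAlgebra ℤ G) : f u ∈ B := by
  induction u using MonoidAlgebra.induction_on with
  | of g => exact h g
  | add u v hu hv => rw [map_add]; exact add_mem hu hv
  | smul r u hu => rw [map_zsmul]; exact zsmul_mem hu r

/-- `(a, b)` lies on one of the rays `ℝ≥0·(1, 0)`, `ℝ≥0·(0, 1)`, `ℝ≥0·(-1, -1)`, the values at
`(xᵢ, yᵢ)` of the nonnegative multiples of `χᵢ`, `ψᵢ` and `φᵢ`. -/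
def OnRays (a b : ℝ) : Prop :=
  (0 ≤ a ∧ b = 0) ∨ (a = 0 ∧ 0 ≤ b) ∨ (a = b ∧ a ≤ 0)

theorem onRays_comm {a b : ℝ} : OnRays a b ↔ OnRays b a := by
  unfold OnRays
  constructor <;> rintro (⟨h₁, h₂⟩ | ⟨h₁, h₂⟩ | ⟨h₁, h₂⟩)
  all_goals first
    | exact Or.inl ⟨h₂, h₁⟩
    | exact Or.inr (Or.inl ⟨h₂, h₁⟩)
    | exact Or.inr (Or.inr ⟨h₁.symm, h₁ ▸ h₂⟩)

section

variable {G : Type*} [Group G] {χ : G → ℝ} {U : Set G}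

theorem eq_univ_of_mul_mem_of_neg (hχ : IsCharacter χ)
    (hU : ∀ g ∈ U, ∀ h, 0 ≤ χ h → g * h ∈ U) (h1 : 1 ∈ U) {u : G} (hu : χ u < 0)
    (hstep : ∀ g ∈ U, g * u ∈ U) : U = Set.univ := by
  refine Set.eq_univ_of_forall fun h => ?_
  obtain ⟨n, hn⟩ := exists_nat_ge (χ h / χ u)
  have hnu := (div_le_iff_of_neg hu).mp hn
  have hpow (j : ℕ) : h * u⁻¹ ^ n * u ^ j ∈ U := by
    induction j with
    | zero =>
      simpa using hU 1 h1 (h * u⁻¹ ^ n) (by rw [hχ, hχ.map_pow, hχ.map_inv]; linarith)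
    | succ j ih => rw [pow_succ, ← mul_assoc]; exact hstep _ ih
  simpa using hpow n

theorem exists_neg_mul_mem_of_le (hχ : IsCharacter χ)
    (hU : ∀ g ∈ U, ∀ h, 0 ≤ χ h → g * h ∈ U) {x y : G}
    (hxy : ∀ g ∈ U, g * y ∈ U ↔ g * x ∈ U) (h3 : ∀ g, g * x ∈ U → g * y ∈ U → g ∈ U)
    (hle : χ y ≤ χ x) (hoff : ¬ OnRays (χ x) (χ y)) :
    ∃ u, χ u < 0 ∧ ∀ g ∈ U, g * u ∈ U := by
  rcases lt_trichotomy (χ y) 0 with hy | hy | hy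
  · rcases le_or_gt 0 (χ x) with hx | hx
    · exact ⟨y, hy, fun g hg => (hxy g hg).mpr (hU g hg x hx)⟩
    · have hlt : χ y < χ x := hle.lt_of_ne fun h => hoff (Or.inr (Or.inr ⟨h.symm, hx.le⟩))
      refine ⟨x⁻¹ * y, by rw [hχ, hχ.map_inv]; linarith, fun g hg => ?_⟩
      have hgx : g * x⁻¹ ∈ U := hU g hg _ (by rw [hχ.map_inv]; linarith)
      rw [← mul_assoc]
      exact (hxy _ hgx).mpr (by rwa [inv_mul_cancel_right])
  · exact absurd (Or.inl ⟨hy ▸ hle, hy⟩) hoff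
  · refine ⟨y⁻¹, by rw [hχ.map_inv]; linarith, fun g hg => h3 _ ?_ (by rwa [inv_mul_cancel_right])⟩
    rw [mul_assoc]
    exact hU g hg _ (by rw [hχ, hχ.map_inv]; linarith)

theorem eq_univ_of_not_onRays (hχ : IsCharacter χ)
    (hU : ∀ g ∈ U, ∀ h, 0 ≤ χ h → g * h ∈ U) (h1 : 1 ∈ U) {x y : G}
    (hxy : ∀ g ∈ U, g * y ∈ U ↔ g * x ∈ U) (h3 : ∀ g, g * x ∈ U → g * y ∈ U → g ∈ U)
    (hoff : ¬ OnRays (χ x) (χ y)) : U = Set.univ := by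
  obtain ⟨u, hu, hstep⟩ : ∃ u, χ u < 0 ∧ ∀ g ∈ U, g * u ∈ U := by
    rcases le_total (χ y) (χ x) with hle | hle
    · exact exists_neg_mul_mem_of_le hχ hU hxy h3 hle hoff
    · exact exists_neg_mul_mem_of_le hχ hU (fun g hg => (hxy g hg).symm)
        (fun g hy hx => h3 g hx hy) hle (onRays_comm.not.mp hoff)
  exact eq_univ_of_mul_mem_of_neg hχ hU h1 hu hstep

end

namespace Heisenberg

variable {k : ℕ} {m : Fin k → ℤ}

theorem commutator_of_of_eq_one {s t : (Fin k ⊕ Fin k) ⊕ Unit}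
    (h : ⁅FreeGroup.of s, FreeGroup.of t⁆ ∈ heisenbergRels k m) :
    ⁅(PresentedGroup.of s : Heisenberg k m), (PresentedGroup.of t : Heisenberg k m)⁆ = 1 :=
  (map_commutatorElement (G' := Heisenberg k m) (PresentedGroup.mk _) _ _).symm.trans
    (PresentedGroup.one_of_mem h)

theorem commutator_hXg_hYg (i j : Fin k) :
    ⁅hXg k m i, hYg k m j⁆ = hZg k m ^ (if i = j then m i else 0) := by
  have h := PresentedGroup.one_of_mem (rels := heisenbergRels k m) <|
    Or.inr <| Or.inr <| Or.inl ⟨i, j, rfl⟩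
  rwa [map_mul, map_inv, map_zpow, map_commutatorElement, mul_inv_eq_one] at h

theorem hZg_mem_center : hZg k m ∈ Subgroup.center (Heisenberg k m) := by
  refine Subgroup.mem_center_iff.mpr fun g => Subgroup.mem_centralizer_singleton_iff.mp <|
    PresentedGroup.generated_by _ _ (fun s => ?_) g
  rw [Subgroup.mem_centralizer_iff_commutator_eq_one']
  rintro _ rfl
  rcases s with (i | i) | ⟨⟩
  · exact commutator_of_of_eq_one (Or.inr <| Or.inr <| Or.inr <| Or.inl ⟨i, rfl⟩)
  · exact commutator_of_of_eq_one (Or.inr <| Or.inr <| Or.inr <| Or.inr ⟨i, rfl⟩)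
  · exact commutatorElement_self _

instance : (Subgroup.zpowers (hZg k m)).Normal :=
  ⟨fun n hn g => by
    rwa [Subgroup.mem_center_iff.mp (Subgroup.zpowers_le.mpr hZg_mem_center hn) g,
      mul_inv_cancel_right]⟩

theorem commutator_of_of_mem_zpowers (s t : (Fin k ⊕ Fin k) ⊕ Unit) :
    ⁅(PresentedGroup.of s : Heisenberg k m), PresentedGroup.of t⁆ ∈
      Subgroup.zpowers (hZg k m) := by
  have of_rel {s t} (h : ⁅FreeGroup.of s, FreeGroup.of t⁆ ∈ heisenbergRels k m) :
      ⁅(PresentedGroup.of s : Heisenberg k m), PresentedGroup.of t⁆ ∈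
        Subgroup.zpowers (hZg k m) :=
    commutator_of_of_eq_one h ▸ one_mem _
  have of_swap {s t} (h : ⁅(PresentedGroup.of t : Heisenberg k m), PresentedGroup.of s⁆ ∈
      Subgroup.zpowers (hZg k m)) :
      ⁅(PresentedGroup.of s : Heisenberg k m), PresentedGroup.of t⁆ ∈
        Subgroup.zpowers (hZg k m) :=
    commutatorElement_inv (G := Heisenberg k m) _ _ ▸ inv_mem h
  have of_xy (i j : Fin k) : ⁅hXg k m i, hYg k m j⁆ ∈ Subgroup.zpowers (hZg k m) :=
    (commutator_hXg_hYg i j).symm ▸ Subgroup.zpow_mem_zpowers _ _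
  rcases s with (i | i) | ⟨⟩ <;> rcases t with (j | j) | ⟨⟩
  · exact of_rel (Or.inl ⟨i, j, rfl⟩)
  · exact of_xy i j
  · exact of_rel (Or.inr <| Or.inr <| Or.inr <| Or.inl ⟨i, rfl⟩)
  · exact of_swap (of_xy j i)
  · exact of_rel (Or.inr <| Or.inl ⟨i, j, rfl⟩)
  · exact of_rel (Or.inr <| Or.inr <| Or.inr <| Or.inr ⟨i, rfl⟩)
  · exact of_swap (of_rel (Or.inr <| Or.inr <| Or.inr <| Or.inl ⟨j, rfl⟩))
  · exact of_swap (of_rel (Or.inr <| Or.inr <| Or.inr <| Or.inr ⟨j, rfl⟩))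
  · exact commutatorElement_self (G := Heisenberg k m) _ ▸ one_mem _

theorem exists_mul_eq_zpow_mul (a b : Heisenberg k m) :
    ∃ t : ℤ, a * b = hZg k m ^ t * (b * a) := by
  obtain ⟨t, ht⟩ := Subgroup.mem_zpowers_iff.mp <|
    PresentedGroup.commutator_mem_of_forall_of _ commutator_of_of_mem_zpowers a b
  exact ⟨t, by rw [ht, commutatorElement_def]; group⟩

end Heisenberg

theorem IsCharacter.map_hZg {k : ℕ} {m : Fin k → ℤ} {χ : Heisenberg k m → ℝ}
    (hχ : IsCharacter χ) (hk : 1 ≤ k) (hm : ∀ i, m i ≠ 0) : χ (hZg k m) = 0 := by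
  let i : Fin k := ⟨0, hk⟩
  have h := congrArg χ (Heisenberg.commutator_hXg_hYg (m := m) i i)
  rw [if_pos rfl, hχ.map_zpow, commutatorElement_def, hχ, hχ, hχ, hχ.map_inv, hχ.map_inv] at h
  exact (mul_eq_zero.mp (by linarith)).resolve_left (Int.cast_ne_zero.mpr (hm i))

theorem IsCharacter.eq_of_hXg_hYg {k : ℕ} {m : Fin k → ℤ} (hk : 1 ≤ k) (hm : ∀ i, m i ≠ 0)
    {χ χ' : Heisenberg k m → ℝ} (hχ : IsCharacter χ) (hχ' : IsCharacter χ')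
    (hx : ∀ j, χ (hXg k m j) = χ' (hXg k m j)) (hy : ∀ j, χ (hYg k m j) = χ' (hYg k m j)) :
    χ = χ' :=
  hχ.ext_presentedGroup hχ' fun
    | .inl (.inl j) => hx j
    | .inl (.inr j) => hy j
    | .inr () => (hχ.map_hZg hk hm).trans (hχ'.map_hZg hk hm).symm

namespace HeisMod

variable {k : ℕ} {m : Fin k → ℤ}

open MulOpposite

-- `ι₁ u` and `ι₂ u` are the elements `a₁·u` and `a₂·u` of `A`.
noncomputable def ι₁ : HZR k m →ₗ[(HZR k m)ᵐᵒᵖ] HeisMod k m :=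
  (heisModSub k m).mkQ ∘ₗ LinearMap.inl _ _ _

noncomputable def ι₂ : HZR k m →ₗ[(HZR k m)ᵐᵒᵖ] HeisMod k m :=
  (heisModSub k m).mkQ ∘ₗ LinearMap.inr _ _ _

theorem ι₁_add_ι₂ (u v : HZR k m) : ι₁ u + ι₂ v = Submodule.Quotient.mk (u, v) := by
  simp [ι₁, ι₂, ← Submodule.Quotient.mk_add]

theorem ι₁_mul_add_ι₂_mul {u v : HZR k m} (h : (u, v) ∈ heisModRelators k m) (w : HZR k m) :
    ι₁ (u * w) + ι₂ (v * w) = 0 := by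
  rw [ι₁_add_ι₂, Submodule.Quotient.mk_eq_zero, ← op_smul_eq_mul, ← op_smul_eq_mul,
    ← Prod.smul_mk]
  exact Submodule.smul_mem _ _ (Submodule.subset_span h)

noncomputable def a₁ (g : Heisenberg k m) : HeisMod k m := ι₁ (MonoidAlgebra.of ℤ _ g)

noncomputable def a₂ (g : Heisenberg k m) : HeisMod k m := ι₂ (MonoidAlgebra.of ℤ _ g)

theorem a₁_mul (g h : Heisenberg k m) : a₁ (g * h) = op (MonoidAlgebra.of ℤ _ h) • a₁ g := by
  rw [a₁, a₁, ← map_smul, op_smul_eq_mul, map_mul]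

theorem a₂_mul (g h : Heisenberg k m) : a₂ (g * h) = op (MonoidAlgebra.of ℤ _ h) • a₂ g := by
  rw [a₂, a₂, ← map_smul, op_smul_eq_mul, map_mul]

theorem a₁_hYg_mul (j : Fin k) (g : Heisenberg k m) :
    a₁ (hYg k m j * g) = a₁ g + a₁ (hXg k m j * g) := by
  have h := ι₁_mul_add_ι₂_mul (Or.inl <| Or.inr ⟨j, rfl⟩) (MonoidAlgebra.of ℤ _ g)
  simp only [sub_mul, one_mul, zero_mul, map_sub, map_zero, add_zero, ← map_mul] at h
  rw [a₁, a₁, a₁]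
  linear_combination (norm := abel) h

theorem a₂_hYg_mul (j : Fin k) (g : Heisenberg k m) :
    a₂ (hYg k m j * g) = a₂ g + a₂ (hXg k m j * g) := by
  have h := ι₁_mul_add_ι₂_mul (Or.inr ⟨j, rfl⟩) (MonoidAlgebra.of ℤ _ g)
  simp only [sub_mul, one_mul, zero_mul, map_sub, map_zero, zero_add, ← map_mul] at h
  rw [a₂, a₂, a₂]
  linear_combination (norm := abel) h

theorem a₁_hZg_mul (g : Heisenberg k m) : a₁ (hZg k m * g) = a₁ g + a₂ g := by
  have h := ι₁_mul_add_ι₂_mul (Or.inl <| Or.inl <| Or.inl rfl) (MonoidAlgebra.of ℤ _ g)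
  simp only [sub_mul, one_mul, neg_mul, map_sub, map_neg, ← map_mul] at h
  rw [a₁, a₁, a₂]
  linear_combination (norm := abel) h

theorem a₂_hZg_mul (g : Heisenberg k m) : a₂ (hZg k m * g) = a₁ g + 2 • a₂ g := by
  have h := ι₁_mul_add_ι₂_mul (Or.inl <| Or.inl <| Or.inr rfl) (MonoidAlgebra.of ℤ _ g)
  simp only [sub_mul, one_mul, neg_mul, two_mul, map_sub, map_neg, map_add, ← map_mul] at h
  rw [a₁, a₂, a₂]
  linear_combination (norm := abel) h

variable {B : AddSubgroup (HeisMod k m)}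

def gensIn (B : AddSubgroup (HeisMod k m)) : Set (Heisenberg k m) :=
  {g | a₁ g ∈ B ∧ a₂ g ∈ B}

theorem mem_gensIn {g : Heisenberg k m} : g ∈ gensIn B ↔ a₁ g ∈ B ∧ a₂ g ∈ B := Iff.rfl

theorem mul_mem_gensIn {g : Heisenberg k m} (hg : g ∈ gensIn B) (h : Heisenberg k m)
    (hB : ∀ b ∈ B, op (MonoidAlgebra.of ℤ _ h) • b ∈ B) : g * h ∈ gensIn B := by
  rw [mem_gensIn, a₁_mul, a₂_mul]
  exact ⟨hB _ hg.1, hB _ hg.2⟩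

theorem hZg_mul_mem_gensIn_iff (g : Heisenberg k m) : hZg k m * g ∈ gensIn B ↔ g ∈ gensIn B := by
  simp only [mem_gensIn, a₁_hZg_mul, a₂_hZg_mul]
  refine ⟨fun ⟨h₁, h₂⟩ => ⟨?_, ?_⟩, fun ⟨h₁, h₂⟩ => ⟨add_mem h₁ h₂, add_mem h₁ (nsmul_mem h₂ 2)⟩⟩
  · -- the matrix `[[1, 1], [1, 2]]` of `z` is invertible over `ℤ`
    have e : a₁ g = 2 • (a₁ g + a₂ g) - (a₁ g + 2 • a₂ g) := by abel
    exact e ▸ sub_mem (nsmul_mem h₁ 2) h₂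
  · have e : a₂ g = (a₁ g + 2 • a₂ g) - (a₁ g + a₂ g) := by abel
    exact e ▸ sub_mem h₂ h₁

theorem zpow_hZg_mul_mem_gensIn_iff (t : ℤ) (g : Heisenberg k m) :
    hZg k m ^ t * g ∈ gensIn B ↔ g ∈ gensIn B := by
  induction t using Int.induction_on generalizing g with
  | zero => rw [zpow_zero, one_mul]
  | succ n ih => rw [zpow_add_one, mul_assoc, ih, hZg_mul_mem_gensIn_iff]
  | pred n ih =>
    rw [zpow_sub_one, mul_assoc, ih, ← hZg_mul_mem_gensIn_iff, mul_inv_cancel_left]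

theorem mul_mem_gensIn_comm (g h : Heisenberg k m) : g * h ∈ gensIn B ↔ h * g ∈ gensIn B := by
  obtain ⟨t, ht⟩ := Heisenberg.exists_mul_eq_zpow_mul g h
  rw [ht, zpow_hZg_mul_mem_gensIn_iff]

theorem mul_hYg_mem_gensIn_iff (j : Fin k) {g : Heisenberg k m} (hg : g ∈ gensIn B) :
    g * hYg k m j ∈ gensIn B ↔ g * hXg k m j ∈ gensIn B := by
  rw [mul_mem_gensIn_comm, mul_mem_gensIn_comm g, mem_gensIn, mem_gensIn,
    a₁_hYg_mul, a₂_hYg_mul, B.add_mem_cancel_left hg.1, B.add_mem_cancel_left hg.2]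

theorem mem_gensIn_of_mul_hXg_of_mul_hYg (j : Fin k) {g : Heisenberg k m}
    (hx : g * hXg k m j ∈ gensIn B) (hy : g * hYg k m j ∈ gensIn B) : g ∈ gensIn B := by
  rw [mul_mem_gensIn_comm] at hx hy
  rw [mem_gensIn, a₁_hYg_mul, a₂_hYg_mul] at hy
  exact ⟨(B.add_mem_cancel_right hx.1).mp hy.1, (B.add_mem_cancel_right hx.2).mp hy.2⟩

theorem eq_top_of_gensIn_eq_univ (h : gensIn B = Set.univ) : B = ⊤ := by
  have hg (g : Heisenberg k m) : g ∈ gensIn B := h ▸ Set.mem_univ g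
  refine (AddSubgroup.eq_top_iff' B).mpr fun w => ?_
  obtain ⟨⟨u, v⟩, rfl⟩ := Submodule.Quotient.mk_surjective _ w
  rw [← ι₁_add_ι₂]
  exact add_mem (MonoidAlgebra.map_mem_of_forall_of ι₁.toAddMonoidHom (fun g => (hg g).1) u)
    (MonoidAlgebra.map_mem_of_forall_of ι₂.toAddMonoidHom (fun g => (hg g).2) v)

theorem eq_top_of_not_onRays {χ : Heisenberg k m → ℝ} (hχ : IsCharacter χ) {i : Fin k}
    (hoff : ¬ OnRays (χ (hXg k m i)) (χ (hYg k m i)))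
    (hB : ∀ h, 0 ≤ χ h → ∀ b ∈ B, op (MonoidAlgebra.of ℤ _ h) • b ∈ B)
    (h₁ : a₁ 1 ∈ B) (h₂ : a₂ 1 ∈ B) : B = ⊤ :=
  eq_top_of_gensIn_eq_univ <| eq_univ_of_not_onRays hχ
    (fun _ hg h hh => mul_mem_gensIn hg h (hB h hh)) ⟨h₁, h₂⟩
    (fun _ => mul_hYg_mem_gensIn_iff i) (fun _ => mem_gensIn_of_mul_hXg_of_mul_hYg i) hoff

end HeisMod

section Cone

variable {k : ℕ} {m : Fin k → ℤ} {χvec ψvec : Fin k → Heisenberg k m → ℝ}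

theorem isCharacter_of_mem_cone_gens (hχhom : ∀ i, IsCharacter (χvec i))
    (hψhom : ∀ i, IsCharacter (ψvec i)) {i : Fin k} {l : Heisenberg k m → ℝ}
    (hl : l = χvec i ∨ l = ψvec i ∨ l = fun h => -(χvec i h) - ψvec i h) : IsCharacter l := by
  rcases hl with rfl | rfl | rfl
  · exact hχhom i
  · exact hψhom i
  · intro a b
    simp only [hχhom i a b, hψhom i a b]
    ring

theorem exists_coeff_of_onRays
    (hχx : ∀ i j, χvec i (hXg k m j) = if i = j then 1 else 0)
    (hχy : ∀ i j, χvec i (hYg k m j) = 0) (hψx : ∀ i j, ψvec i (hXg k m j) = 0)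
    (hψy : ∀ i j, ψvec i (hYg k m j) = if i = j then 1 else 0) (i : Fin k) {a b : ℝ}
    (hab : OnRays a b) :
    ∃ (c : ℝ) (l : Heisenberg k m → ℝ), 0 ≤ c ∧
      (l = χvec i ∨ l = ψvec i ∨ l = fun h => -(χvec i h) - ψvec i h) ∧
      ∀ j, c * l (hXg k m j) = (if i = j then a else 0) ∧
        c * l (hYg k m j) = if i = j then b else 0 := by
  rcases hab with ⟨ha, rfl⟩ | ⟨rfl, hb⟩ | ⟨rfl, ha⟩
  · exact ⟨a, χvec i, ha, Or.inl rfl, fun j => by simp [hχx, hχy]⟩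
  · exact ⟨b, ψvec i, hb, Or.inr (Or.inl rfl), fun j => by simp [hψx, hψy]⟩
  · refine ⟨-a, _, neg_nonneg.mpr ha, Or.inr (Or.inr rfl), fun j => ?_⟩
    by_cases hij : i = j <;> simp [hij, hχx, hχy, hψx, hψy]

theorem exists_cone_repr_of_forall_onRays (hk : 1 ≤ k) (hm : ∀ i, m i ≠ 0)
    (hχhom : ∀ i, IsCharacter (χvec i)) (hψhom : ∀ i, IsCharacter (ψvec i))
    (hχx : ∀ i j, χvec i (hXg k m j) = if i = j then 1 else 0)
    (hχy : ∀ i j, χvec i (hYg k m j) = 0) (hψx : ∀ i j, ψvec i (hXg k m j) = 0)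
    (hψy : ∀ i j, ψvec i (hYg k m j) = if i = j then 1 else 0)
    {χ : Heisenberg k m → ℝ} (hχ : IsCharacter χ)
    (hray : ∀ i, OnRays (χ (hXg k m i)) (χ (hYg k m i))) :
    ∃ (c : Fin k → ℝ) (lam : Fin k → Heisenberg k m → ℝ),
      (∀ i, 0 ≤ c i) ∧
      (∀ i, lam i = χvec i ∨ lam i = ψvec i ∨ lam i = fun h => -(χvec i h) - ψvec i h) ∧
      χ = fun h => ∑ i, c i * lam i h := by
  choose c lam hc hlam hval using fun i => exists_coeff_of_onRays hχx hχy hψx hψy i (hray i)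
  refine ⟨c, lam, hc, hlam, hχ.eq_of_hXg_hYg hk hm
    (.sum _ c fun i => isCharacter_of_mem_cone_gens hχhom hψhom (hlam i)) ?_ ?_⟩ <;>
    simp [hval]

end Cone

theorem char_in_cone_of_heisMod_not_fg_general
    (k : ℕ) (hk : 1 ≤ k) (m : Fin k → ℤ) (hm : ∀ i, m i ≠ 0)
    (χvec ψvec : Fin k → Heisenberg k m → ℝ)
    (hχhom : ∀ i, ∀ a b, χvec i (a * b) = χvec i a + χvec i b)
    (hψhom : ∀ i, ∀ a b, ψvec i (a * b) = ψvec i a + ψvec i b)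
    (hχx : ∀ i j, χvec i (hXg k m j) = if i = j then 1 else 0)
    (hχy : ∀ i j, χvec i (hYg k m j) = 0)
    (hψx : ∀ i j, ψvec i (hXg k m j) = 0)
    (hψy : ∀ i j, ψvec i (hYg k m j) = if i = j then 1 else 0)
    (χ : Heisenberg k m → ℝ) (hχ : ∀ a b, χ (a * b) = χ a + χ b)
    (hnfg : ¬ ∃ S : Finset (HeisMod k m), ∀ B : AddSubgroup (HeisMod k m),
      (∀ h : Heisenberg k m, 0 ≤ χ h → ∀ b ∈ B,
        MulOpposite.op (MonoidAlgebra.of ℤ (Heisenberg k m) h) • b ∈ B) →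
      (↑S : Set (HeisMod k m)) ⊆ ↑B → B = ⊤) :
    ∃ (c : Fin k → ℝ) (lam : Fin k → Heisenberg k m → ℝ),
      (∀ i, 0 ≤ c i) ∧
      (∀ i, lam i = χvec i ∨ lam i = ψvec i ∨
        lam i = fun h => -(χvec i h) - ψvec i h) ∧
      χ = fun h => ∑ i, c i * lam i h := by
  by_cases hray : ∀ i, OnRays (χ (hXg k m i)) (χ (hYg k m i))
  · exact exists_cone_repr_of_forall_onRays hk hm hχhom hψhom hχx hχy hψx hψy hχ hray
  · classical
    obtain ⟨i, hoff⟩ := not_forall.mp hray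
    refine absurd ⟨{HeisMod.a₁ 1, HeisMod.a₂ 1}, fun B hB hS => ?_⟩ hnfg
    exact HeisMod.eq_top_of_not_onRays hχ hoff hB (hS (by simp)) (hS (by simp))

/-- Let `H` be the generalized Heisenberg group of rank `k ≥ 1` with nonzero parameters `m`
and let `A` be the right `ℤH`-module presented by generators `a₁, a₂` and relations
`a₁·z = a₁ + a₂`, `a₂·z = a₁ + 2a₂`, `aᵢ·yⱼ = aᵢ + aᵢ·xⱼ`.  Let `χᵢ, ψᵢ : H → (ℝ,+)` be
the characters with `χᵢ(xⱼ) = δᵢⱼ`, `χᵢ(yⱼ) = 0`, `ψᵢ(xⱼ) = 0`, `ψᵢ(yⱼ) = δᵢⱼ` and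
`χᵢ(z) = ψᵢ(z) = 0`, and set `φᵢ = -χᵢ - ψᵢ`.  If `χ : H → (ℝ,+)` is a homomorphism such
that `A` is NOT finitely generated over the monoid ring `ℤ[H_χ]` of
`H_χ = {h : χ h ≥ 0}`, then `χ = c₁λ₁ + ⋯ + c_kλ_k` for some nonnegative reals `cᵢ` and
some `λᵢ ∈ {χᵢ, ψᵢ, φᵢ}`; in particular `χ` lies in one of the `3^k` convex cones
generated by the sets `{λ₁, …, λ_k}`. -/
theorem char_in_cone_of_heisMod_not_fg
    (k : ℕ) (hk : 1 ≤ k) (m : Fin k → ℤ) (hm : ∀ i, m i ≠ 0)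
    (χvec ψvec : Fin k → Heisenberg k m → ℝ)
    (hχhom : ∀ i, ∀ a b, χvec i (a * b) = χvec i a + χvec i b)
    (hψhom : ∀ i, ∀ a b, ψvec i (a * b) = ψvec i a + ψvec i b)
    (hχx : ∀ i j, χvec i (hXg k m j) = if i = j then 1 else 0)
    (hχy : ∀ i j, χvec i (hYg k m j) = 0)
    (hχz : ∀ i, χvec i (hZg k m) = 0)
    (hψx : ∀ i j, ψvec i (hXg k m j) = 0)
    (hψy : ∀ i j, ψvec i (hYg k m j) = if i = j then 1 else 0)
    (hψz : ∀ i, ψvec i (hZg k m) = 0)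
    (χ : Heisenberg k m → ℝ) (hχ : ∀ a b, χ (a * b) = χ a + χ b)
    (hnfg : ¬ ∃ S : Finset (HeisMod k m), ∀ B : AddSubgroup (HeisMod k m),
      (∀ h : Heisenberg k m, 0 ≤ χ h → ∀ b ∈ B,
        MulOpposite.op (MonoidAlgebra.of ℤ (Heisenberg k m) h) • b ∈ B) →
      (↑S : Set (HeisMod k m)) ⊆ ↑B → B = ⊤) :
    ∃ (c : Fin k → ℝ) (lam : Fin k → Heisenberg k m → ℝ),
      (∀ i, 0 ≤ c i) ∧
      (∀ i, lam i = χvec i ∨ lam i = ψvec i ∨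
        lam i = fun h => -(χvec i h) - ψvec i h) ∧
      χ = fun h => ∑ i, c i * lam i h :=
  char_in_cone_of_heisMod_not_fg_general k hk m hm χvec ψvec hχhom hψhom hχx hχy hψx hψy χ hχ hnfg
end
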